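/- arXiv:1402.3279 — 6 statements merged into one kernel-verified Lean document; each statement's English description precedes it below -/
import Mathlib

section
/- For a two-universal family of hash functions and the associated maps ψ, τ, for all P, Q ∈ ℝ^N with nonnegative entries: ⟨Q, (ψ†∘ψ)(P)⟩ ≤ (1/D)·⟨P,Q⟩ + (1/(|M|·D))·(Σ_j P_j)(Σ_k Q_k). -/
open Finset

/-!
Expanding the squares, `⟨ψ Q, ψ P⟩ = (1/|D|) Σ_{x,y} Q x P y · c(x, y)`, where `c(x, y)` is the
fraction of hash functions under which `x` and `y` collide. Diagonal terms have `c ≤ 1`, and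
two-universality bounds every off-diagonal `c` by `1/|M|`; nonnegativity of `P` and `Q` lets the
off-diagonal sum be enlarged to the full double sum.
-/

variable {N M D R : Type*} [DecidableEq M]

/-- The vector `P_{g(N)}` of the paper. -/
def pushforward [Fintype N] [AddCommMonoid R] (g : N → M) (P : N → R) (m : M) : R :=
  ∑ x, if g x = m then P x else 0

/-- The entry at `(m, i)` of `ψ(P) = (1/D) Σ_i P_{f_i(N)} ⊗ e_i`. -/
noncomputable def hashEmbedding [Fintype N] [Fintype D] (f : D → N → M) (P : N → ℝ)
    (mi : M × D) : ℝ :=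
  pushforward (f mi.2) P mi.1 / Fintype.card D

noncomputable def collisionFreq [Fintype D] (f : D → N → M) (x y : N) : ℝ :=
  (∑ i, if f i x = f i y then (1 : ℝ) else 0) / Fintype.card D

theorem sum_pushforward_mul_pushforward [Fintype N] [Fintype M] [CommSemiring R] (g : N → M)
    (P Q : N → R) :
    ∑ m, pushforward g Q m * pushforward g P m =
      ∑ x, ∑ y, if g x = g y then Q x * P y else 0 := by
  simp only [pushforward, sum_mul_sum, ite_mul, mul_ite, zero_mul, mul_zero]
  rw [sum_comm]
  refine sum_congr rfl fun x _ => ?_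
  rw [sum_comm]
  refine sum_congr rfl fun y _ => ?_
  by_cases h : g x = g y <;> simp [h, eq_comm]

theorem sum_hashEmbedding_mul [Fintype N] [Fintype M] [Fintype D] (f : D → N → M)
    (P Q : N → ℝ) :
    ∑ mi, hashEmbedding f Q mi * hashEmbedding f P mi =
      (∑ x, ∑ y, Q x * P y * collisionFreq f x y) / Fintype.card D := by
  calc ∑ mi, hashEmbedding f Q mi * hashEmbedding f P mi
      = (∑ i, ∑ m, pushforward (f i) Q m * pushforward (f i) P m)
          / (Fintype.card D * Fintype.card D) := by
        simp only [hashEmbedding, div_mul_div_comm, ← sum_div]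
        rw [Fintype.sum_prod_type_right]
    _ = (∑ i, ∑ x, ∑ y, if f i x = f i y then Q x * P y else 0)
          / (Fintype.card D * Fintype.card D) := by
        simp only [sum_pushforward_mul_pushforward]
    _ = (∑ x, ∑ y, Q x * P y * ∑ i, if f i x = f i y then (1 : ℝ) else 0)
          / (Fintype.card D * Fintype.card D) := by
        congr 1
        simp only [mul_sum, mul_ite, mul_one, mul_zero]
        rw [sum_comm]
        exact sum_congr rfl fun x _ => sum_comm
    _ = _ := by simp only [collisionFreq, mul_div_assoc', ← sum_div, div_div]

theorem collisionFreq_self_le_one [Fintype D] (f : D → N → M) (x : N) :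
    collisionFreq f x x ≤ 1 := by
  simpa [collisionFreq] using div_self_le_one (Fintype.card D : ℝ)

theorem sum_sum_mul_le_of_diag_le_one_of_offDiag_le {ι : Type*} [Fintype ι] [Semiring R]
    [PartialOrder R] [IsOrderedRing R] (w c : ι → ι → R) (ε : R) (hw : ∀ x y, 0 ≤ w x y)
    (hε : 0 ≤ ε) (hdiag : ∀ x, c x x ≤ 1) (hoff : ∀ x y, x ≠ y → c x y ≤ ε) :
    ∑ x, ∑ y, w x y * c x y ≤ ∑ x, w x x + (∑ x, ∑ y, w x y) * ε := by
  classical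
  have hpoint : ∀ x y, w x y * c x y ≤ (if x = y then w x y else 0) + w x y * ε := by
    intro x y
    by_cases hxy : x = y
    · subst hxy
      calc w x x * c x x ≤ w x x * 1 := mul_le_mul_of_nonneg_left (hdiag x) (hw x x)
        _ ≤ _ := by simpa using le_add_of_nonneg_right (mul_nonneg (hw x x) hε)
    · simpa [hxy] using mul_le_mul_of_nonneg_left (hoff x y hxy) (hw x y)
  calc ∑ x, ∑ y, w x y * c x y
      ≤ ∑ x, ∑ y, ((if x = y then w x y else 0) + w x y * ε) :=
        sum_le_sum fun x _ => sum_le_sum fun y _ => hpoint x y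
    _ = _ := by simp [sum_add_distrib, sum_mul]

theorem two_universal_quadratic_bound_general
    {N M D : Type} [Fintype N] [Fintype M] [DecidableEq M]
    [Fintype D]
    (f : D → N → M)
    (huniv : ∀ j k : N, j ≠ k →
      (∑ i : D, if f i j = f i k then (1 : ℝ) else 0) / (Fintype.card D)
        ≤ 1 / (Fintype.card M))
    (P Q : N → ℝ) (hP : ∀ x, 0 ≤ P x) (hQ : ∀ x, 0 ≤ Q x) :
    ∑ mi : M × D,
        ((∑ x, if f mi.2 x = mi.1 then Q x else 0) / (Fintype.card D)) *
        ((∑ x, if f mi.2 x = mi.1 then P x else 0) / (Fintype.card D))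
      ≤ (1 / (Fintype.card D)) * ∑ x, P x * Q x
        + (1 / ((Fintype.card M) * (Fintype.card D))) * ((∑ j, P j) * (∑ k, Q k)) := by
  change ∑ mi, hashEmbedding f Q mi * hashEmbedding f P mi ≤ _
  have hbound := sum_sum_mul_le_of_diag_le_one_of_offDiag_le (fun x y => Q x * P y)
    (collisionFreq f) (1 / Fintype.card M) (fun x y => mul_nonneg (hQ x) (hP y))
    (by positivity) (collisionFreq_self_le_one f) huniv
  rw [sum_hashEmbedding_mul]
  calc _ ≤ (∑ x, Q x * P x + (∑ x, ∑ y, Q x * P y) * (1 / Fintype.card M)) / Fintype.card D :=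
        div_le_div_of_nonneg_right hbound (Nat.cast_nonneg _)
    _ = _ := by
      rw [← sum_mul_sum]
      simp only [mul_comm (Q _) (P _)]
      ring

/-- for a two-universal family of hash functions and the associated maps
`ψ(P) = (1/D) Σ_i P_{f_i(N)} ⊗ e_i` and nonnegative `P, Q`:
`⟨Q, (ψ†∘ψ)(P)⟩ = ⟨ψ(Q), ψ(P)⟩ ≤ (1/D)⟨P,Q⟩ + (1/(|M|·D))·(Σ_j P_j)(Σ_k Q_k)`. -/
theorem two_universal_quadratic_bound
    {N M D : Type} [Fintype N] [DecidableEq N] [Fintype M] [DecidableEq M]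
    [Fintype D] [DecidableEq D] [Nonempty N] [Nonempty M] [Nonempty D]
    (f : D → N → M)
    (huniv : ∀ j k : N, j ≠ k →
      (∑ i : D, if f i j = f i k then (1 : ℝ) else 0) / (Fintype.card D)
        ≤ 1 / (Fintype.card M))
    (P Q : N → ℝ) (hP : ∀ x, 0 ≤ P x) (hQ : ∀ x, 0 ≤ Q x) :
    ∑ mi : M × D,
        ((∑ x, if f mi.2 x = mi.1 then Q x else 0) / (Fintype.card D)) *
        ((∑ x, if f mi.2 x = mi.1 then P x else 0) / (Fintype.card D))
      ≤ (1 / (Fintype.card D)) * ∑ x, P x * Q x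
        + (1 / ((Fintype.card M) * (Fintype.card D))) * ((∑ j, P j) * (∑ k, Q k)) :=
  two_universal_quadratic_bound_general f huniv P Q hP hQ
end

section
/- Every (k,ε) spectral extractor with input size n = log|N|, output size m = log|M|, and seed size d = log|D| satisfies d ≥ min{n−k, m} + log(1/ε) − O(1) (with constant at most 2, assuming the general extractor lower bound in the remaining edge case k ≥ n−1). -/
/-!
Test the spectral condition on the indicator `P` of the largest fibre of `f d₀` for one seed
`d₀`; its size `s` is at least `|N|/|M|`. Under `d₀` all of `P` lands on a single output,
contributing `s²` to `∑ᵢ ∑ₘ (fiberSum (f i) P m)²`, while by Cauchy–Schwarz each other seed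
contributes at least `s²/|M|`. Comparing with the spectral bound gives `(|M| - 1) s ≤ 2^k ε |D|`, hence
`|N| ≤ 2 · 2^k ε |D|`, i.e. `d ≥ n - k + log(1/ε) - 1`.
-/

open Finset

section FiberSum

variable {N M : Type*} [Fintype N] [DecidableEq M]

def fiberSum (g : N → M) (P : N → ℝ) (m : M) : ℝ := ∑ x, if g x = m then P x else 0

lemma fiberSum_eq_sum_of_support {g : N → M} {P : N → ℝ} {m₀ : M}
    (hP : ∀ x, g x ≠ m₀ → P x = 0) : fiberSum g P m₀ = ∑ x, P x :=
  Finset.sum_congr rfl fun x _ => by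
    by_cases hx : g x = m₀
    · rw [if_pos hx]
    · rw [if_neg hx, hP x hx]

variable [Fintype M]

lemma sum_fiberSum (g : N → M) (P : N → ℝ) : ∑ m, fiberSum g P m = ∑ x, P x := by
  simp only [fiberSum]
  rw [Finset.sum_comm]
  simp

lemma sq_sum_le_card_mul_sum_sq_fiberSum (g : N → M) (P : N → ℝ) :
    (∑ x, P x) ^ 2 ≤ Fintype.card M * ∑ m, fiberSum g P m ^ 2 := by
  simpa [sum_fiberSum] using sq_sum_le_card_mul_sum_sq (s := univ) (f := fiberSum g P)

end FiberSum

section SpectralExtractor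

variable {N M D : Type*} [Fintype N] [Fintype M] [DecidableEq M] [Fintype D]

/-- The condition `λ_max(ψ†∘ψ − τ†∘τ) ≤ 2^k ε/(|M||D|)` as an inequality of quadratic forms:
`ψ(P)` has entries `fiberSum (f i) P m / |D|` and `τ(P)` is constant `(∑ P)/(|M||D|)`. -/
def IsSpectralExtractor (f : D → N → M) (k ε : ℝ) : Prop :=
  ∀ P : N → ℝ,
    (∑ mi : M × D, (fiberSum (f mi.2) P mi.1 / Fintype.card D) ^ 2)
      - (∑ _mi : M × D, ((∑ x, P x) / (Fintype.card M * Fintype.card D)) ^ 2)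
      ≤ 2 ^ k * ε / (Fintype.card M * Fintype.card D) * ∑ x, P x ^ 2

namespace IsSpectralExtractor

variable {f : D → N → M} {k ε : ℝ}

lemma sum_sum_sq_fiberSum_le [Nonempty M] [Nonempty D] (hf : IsSpectralExtractor f k ε)
    (P : N → ℝ) :
    ∑ i, ∑ m, fiberSum (f i) P m ^ 2 ≤
      Fintype.card D / Fintype.card M * (2 ^ k * ε * ∑ x, P x ^ 2 + (∑ x, P x) ^ 2) := by
  have hMpos : (0 : ℝ) < Fintype.card M := by exact_mod_cast Fintype.card_pos
  have h := hf P
  simp only [Fintype.sum_prod_type, div_pow, ← Finset.sum_div, sum_const, card_univ,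
    Fintype.card_prod, nsmul_eq_mul, Nat.cast_mul] at h
  rw [Finset.sum_comm] at h
  field_simp at h
  rw [div_mul_eq_mul_div, le_div_iff₀ hMpos]
  linarith

lemma sub_one_mul_sq_sum_le_of_support [Nonempty M] [Nonempty D] (hf : IsSpectralExtractor f k ε)
    {P : N → ℝ} (d₀ : D) (m₀ : M) (hP : ∀ x, f d₀ x ≠ m₀ → P x = 0) :
    (Fintype.card M - 1) * (∑ x, P x) ^ 2 ≤ 2 ^ k * ε * Fintype.card D * ∑ x, P x ^ 2 := by
  classical
  have hMpos : (0 : ℝ) < Fintype.card M := by exact_mod_cast Fintype.card_pos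
  have hcard : ((Fintype.card D - 1 : ℕ) : ℝ) = Fintype.card D - 1 := by
    rw [Nat.cast_sub Fintype.card_pos, Nat.cast_one]
  have hd₀ : (∑ x, P x) ^ 2 ≤ ∑ m, fiberSum (f d₀) P m ^ 2 := by
    rw [← fiberSum_eq_sum_of_support hP]
    exact Finset.single_le_sum (f := fun m => fiberSum (f d₀) P m ^ 2)
      (fun _ _ => sq_nonneg _) (mem_univ m₀)
  have hothers : (Fintype.card D - 1) * ((∑ x, P x) ^ 2 / Fintype.card M) ≤
      ∑ i ∈ univ.erase d₀, ∑ m, fiberSum (f i) P m ^ 2 := by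
    rw [← hcard, ← card_univ, ← card_erase_of_mem (mem_univ d₀), ← nsmul_eq_mul]
    refine card_nsmul_le_sum _ _ _ fun i _ => ?_
    rw [div_le_iff₀ hMpos, mul_comm]
    exact sq_sum_le_card_mul_sum_sq_fiberSum (f i) P
  have hlower := add_le_add hd₀ hothers
  rw [add_sum_erase _ (fun i => ∑ m, fiberSum (f i) P m ^ 2) (mem_univ d₀)] at hlower
  have h := hlower.trans (hf.sum_sum_sq_fiberSum_le P)
  field_simp at h
  linarith

lemma sub_one_mul_card_fiber_le [Nonempty M] [Nonempty D] (hf : IsSpectralExtractor f k ε)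
    (hε : 0 ≤ ε) (d₀ : D) (m₀ : M) :
    (Fintype.card M - 1) * #{x | f d₀ x = m₀} ≤ 2 ^ k * ε * Fintype.card D := by
  set P : N → ℝ := fun x => if f d₀ x = m₀ then 1 else 0
  have hsum : ∑ x, P x = #{x | f d₀ x = m₀} := by simp [P]
  have hsum_sq : ∑ x, P x ^ 2 = #{x | f d₀ x = m₀} := by
    rw [← hsum]; exact sum_congr rfl fun x _ => by by_cases h : f d₀ x = m₀ <;> simp [P, h]
  have h := hf.sub_one_mul_sq_sum_le_of_support d₀ m₀ (P := P) fun x hx => if_neg hx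
  rw [hsum, hsum_sq] at h
  rcases (Nat.cast_nonneg (α := ℝ) #{x | f d₀ x = m₀}).eq_or_lt with h0 | hpos
  · rw [← h0, mul_zero]; positivity
  · nlinarith

lemma card_le [Nonempty D] (hf : IsSpectralExtractor f k ε) (hε : 0 ≤ ε)
    (hM : 1 < Fintype.card M) : (Fintype.card N : ℝ) ≤ 2 * 2 ^ k * ε * Fintype.card D := by
  have : Nonempty M := Fintype.card_pos_iff.mp (by omega)
  have hM' : (2 : ℝ) ≤ Fintype.card M := by exact_mod_cast hM
  obtain ⟨d₀⟩ := ‹Nonempty D›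
  obtain ⟨m₀, hm₀⟩ := Fintype.exists_le_card_fiber_of_nsmul_le_card (f d₀)
    (b := (Fintype.card N : ℝ) / Fintype.card M) (by rw [nsmul_eq_mul, mul_div_cancel₀]; positivity)
  have hfiber := hf.sub_one_mul_card_fiber_le hε d₀ m₀
  rw [div_le_iff₀ (by positivity)] at hm₀
  calc (Fintype.card N : ℝ) ≤ 2 * (Fintype.card M - 1) * #{x | f d₀ x = m₀} := by nlinarith
    _ ≤ 2 * 2 ^ k * ε * Fintype.card D := by linarith

end IsSpectralExtractor

end SpectralExtractor

theorem spectral_extractor_long_seed_general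
    {N M D : Type} [Fintype N] [Fintype M] [DecidableEq M]
    [Fintype D] [Nonempty N] [Nonempty D]
    (hM : 1 < Fintype.card M)
    (f : D → N → M) (k ε : ℝ) (hε : 0 < ε)
    -- spectral extractor condition λ_max(ψ†∘ψ − τ†∘τ) ≤ 2^k ε/(|M||D|)
    (hspec : ∀ P : N → ℝ,
      (∑ mi : M × D, ((∑ x, if f mi.2 x = mi.1 then P x else 0) / (Fintype.card D)) ^ 2)
      - (∑ _mi : M × D, ((∑ x, P x) / (Fintype.card M * Fintype.card D)) ^ 2)
      ≤ 2 ^ k * ε / (Fintype.card M * Fintype.card D) * ∑ x, (P x) ^ 2) :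
    Real.logb 2 (Fintype.card D) ≥
      min (Real.logb 2 (Fintype.card N) - k) (Real.logb 2 (Fintype.card M))
        + Real.logb 2 (1 / ε) - 2 := by
  have hcard : Real.logb 2 (Fintype.card N) ≤ Real.logb 2 (2 * 2 ^ k * ε * Fintype.card D) :=
    Real.logb_le_logb_of_le one_lt_two (by exact_mod_cast Fintype.card_pos)
      (IsSpectralExtractor.card_le hspec hε.le hM)
  have hexpand : Real.logb 2 (2 * 2 ^ k * ε * Fintype.card D) =
      1 + k + Real.logb 2 ε + Real.logb 2 (Fintype.card D) := by
    have hD : (Fintype.card D : ℝ) ≠ 0 := by exact_mod_cast Fintype.card_ne_zero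
    rw [Real.logb_mul (by positivity) hD, Real.logb_mul (by positivity) hε.ne',
      Real.logb_mul two_ne_zero (by positivity), Real.logb_self_eq_one one_lt_two,
      Real.logb_rpow two_pos (by norm_num)]
  rw [one_div, Real.logb_inv]
  linarith [min_le_left (Real.logb 2 (Fintype.card N) - k) (Real.logb 2 (Fintype.card M))]

/-- every (k,ε) spectral extractor with input size `n = log|N|`, output size
`m = log|M|` and seed size `d = log|D|` satisfies
`d ≥ min{n−k, m} + log(1/ε) − 2`.  The remaining edge case `k ≥ n−1`, which in the paper
is handled by the general lower bound on the seed of extractors, is assumed as the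
hypothesis `hedge`. -/
theorem spectral_extractor_long_seed
    {N M D : Type} [Fintype N] [DecidableEq N] [Fintype M] [DecidableEq M]
    [Fintype D] [DecidableEq D] [Nonempty N] [Nonempty D]
    (hM : 1 < Fintype.card M)
    (f : D → N → M) (k ε : ℝ) (hε : 0 < ε) (hk0 : 0 ≤ k)
    (hkn : k ≤ Real.logb 2 (Fintype.card N))
    -- spectral extractor condition λ_max(ψ†∘ψ − τ†∘τ) ≤ 2^k ε/(|M||D|)
    (hspec : ∀ P : N → ℝ,
      (∑ mi : M × D, ((∑ x, if f mi.2 x = mi.1 then P x else 0) / (Fintype.card D)) ^ 2)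
      - (∑ _mi : M × D, ((∑ x, P x) / (Fintype.card M * Fintype.card D)) ^ 2)
      ≤ 2 ^ k * ε / (Fintype.card M * Fintype.card D) * ∑ x, (P x) ^ 2)
    -- edge case k ≥ n − 1: covered by the general extractor seed lower bound
    (hedge : Real.logb 2 (Fintype.card N) - 1 ≤ k →
      Real.logb 2 (Fintype.card D) ≥
        min (Real.logb 2 (Fintype.card N) - k) (Real.logb 2 (Fintype.card M))
          + Real.logb 2 (1 / ε) - 2) :
    Real.logb 2 (Fintype.card D) ≥
      min (Real.logb 2 (Fintype.card N) - k) (Real.logb 2 (Fintype.card M))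
        + Real.logb 2 (1 / ε) - 2 :=
  spectral_extractor_long_seed_general hM f k ε hε hspec
end

section
/- For a unitary 2-design {U_1,…,U_L} on H_N = H_M ⊗ H_{N\M}, the twirl of the partial swap satisfies (1/L) Σ_i (U_i† ⊗ U_i†)(F_{MM'} ⊗ 1_{(N\M)(N'\M')})(U_i ⊗ U_i) = (1/|M|)·((|N|³ − |M|²|N|)/(|N|³ − |N|))·1_{NN'} + (1/|M|)·((|N|²|M|² − |N|²)/(|N|³ − |N|))·F_{NN'}, where F denotes the swap operator. -/
open Matrix Finset
open scoped Kronecker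

noncomputable def swapMat (H : Type) [Fintype H] [DecidableEq H] :
    Matrix (H × H) (H × H) ℂ :=
  Matrix.of fun a b => if a.1 = b.2 ∧ a.2 = b.1 then 1 else 0

noncomputable def IsUnitary2Design {H L : Type} [Fintype H] [DecidableEq H] [Fintype L]
    (U : L → Matrix H H ℂ) : Prop :=
  (∀ i, U i ∈ Matrix.unitaryGroup H ℂ) ∧
  ∀ A : Matrix (H × H) (H × H) ℂ,
    (Fintype.card L : ℂ)⁻¹ • ∑ i, (U i ⊗ₖ U i) * A * (U i ⊗ₖ U i)ᴴ =
      (((Fintype.card H : ℂ) * A.trace - (A * swapMat H).trace) /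
          ((Fintype.card H : ℂ) ^ 3 - (Fintype.card H : ℂ))) • (1 : Matrix (H × H) (H × H) ℂ)
      + (((Fintype.card H : ℂ) * (A * swapMat H).trace - A.trace) /
          ((Fintype.card H : ℂ) ^ 3 - (Fintype.card H : ℂ))) • swapMat H

lemma trace_mul_std' {n : Type} [Fintype n] [DecidableEq n] (A : Matrix n n ℂ) (p q : n) :
    (A * Matrix.single q p (1:ℂ)).trace = A p q := by
  simp [Matrix.trace, Matrix.diag, Matrix.mul_apply, Matrix.single,
    ite_and, Finset.sum_ite_eq, Finset.sum_ite_eq']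

/-- The dagger twirl of a 2-design equals the same projection. -/
lemma dagger_twirl {H L : Type} [Fintype H] [DecidableEq H] [Fintype L]
    (U : L → Matrix H H ℂ) (hU : IsUnitary2Design U) (A : Matrix (H × H) (H × H) ℂ) :
    (Fintype.card L : ℂ)⁻¹ • ∑ i, (U i ⊗ₖ U i)ᴴ * A * (U i ⊗ₖ U i) =
      (((Fintype.card H : ℂ) * A.trace - (A * swapMat H).trace) /
          ((Fintype.card H : ℂ) ^ 3 - (Fintype.card H : ℂ))) • (1 : Matrix (H × H) (H × H) ℂ)
      + (((Fintype.card H : ℂ) * (A * swapMat H).trace - A.trace) /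
          ((Fintype.card H : ℂ) ^ 3 - (Fintype.card H : ℂ))) • swapMat H := by
  classical
  set c1 : ℂ := ((Fintype.card H : ℂ) * A.trace - (A * swapMat H).trace) /
      ((Fintype.card H : ℂ) ^ 3 - (Fintype.card H : ℂ)) with hc1
  set c2 : ℂ := ((Fintype.card H : ℂ) * (A * swapMat H).trace - A.trace) /
      ((Fintype.card H : ℂ) ^ 3 - (Fintype.card H : ℂ)) with hc2
  ext p q
  set E : Matrix (H × H) (H × H) ℂ := Matrix.single q p 1 with hE
  rw [← trace_mul_std' ((Fintype.card L : ℂ)⁻¹ • ∑ i, (U i ⊗ₖ U i)ᴴ * A * (U i ⊗ₖ U i)) p q,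
      ← trace_mul_std' (c1 • (1 : Matrix (H × H) (H × H) ℂ) + c2 • swapMat H) p q]
  have cyc : ∀ i, ((U i ⊗ₖ U i)ᴴ * A * (U i ⊗ₖ U i) * E).trace
      = (A * ((U i ⊗ₖ U i) * E * (U i ⊗ₖ U i)ᴴ)).trace := by
    intro i
    rw [show (U i ⊗ₖ U i)ᴴ * A * (U i ⊗ₖ U i) * E
        = (U i ⊗ₖ U i)ᴴ * (A * ((U i ⊗ₖ U i) * E)) by simp only [mul_assoc],
      Matrix.trace_mul_comm, mul_assoc, mul_assoc]
  have hL : (((Fintype.card L : ℂ)⁻¹ • ∑ i, (U i ⊗ₖ U i)ᴴ * A * (U i ⊗ₖ U i)) * E).trace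
      = (A * ((Fintype.card L : ℂ)⁻¹ • ∑ i, (U i ⊗ₖ U i) * E * (U i ⊗ₖ U i)ᴴ)).trace := by
    rw [Matrix.smul_mul, Matrix.sum_mul, Matrix.trace_smul, Matrix.trace_sum,
      Matrix.mul_smul, Matrix.trace_smul, Matrix.mul_sum, Matrix.trace_sum]
    congr 1
    exact Finset.sum_congr rfl fun i _ => cyc i
  rw [hL, hU.2 E]
  rw [Matrix.mul_add, Matrix.mul_smul, Matrix.mul_smul, Matrix.mul_one,
    Matrix.trace_add, Matrix.trace_smul, Matrix.trace_smul,
    Matrix.add_mul, Matrix.smul_mul, Matrix.smul_mul, Matrix.one_mul,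
    Matrix.trace_add, Matrix.trace_smul, Matrix.trace_smul,
    Matrix.trace_mul_comm (swapMat H) E]
  simp only [smul_eq_mul]
  ring

noncomputable def partG (M J : Type) [Fintype M] [DecidableEq M] [Fintype J] [DecidableEq J] :
    Matrix ((M × J) × (M × J)) ((M × J) × (M × J)) ℂ :=
  Matrix.of fun (a : (M × J) × (M × J)) (b : (M × J) × (M × J)) =>
    if a.1.1 = b.2.1 ∧ a.2.1 = b.1.1 ∧ a.1.2 = b.1.2 ∧ a.2.2 = b.2.2 then (1 : ℂ) else 0
lemma quad_sum (M J : Type) [Fintype M] [DecidableEq M] [Fintype J] [DecidableEq J] :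
    (∑ x : M, ∑ _x1 : J, ∑ x_2 : M, ∑ _x3 : J, if x = x_2 then (1:ℂ) else 0) =
    (Fintype.card M : ℂ) * (Fintype.card J : ℂ)^2 := by
  simp only [Finset.sum_const, Finset.card_univ, nsmul_eq_mul, mul_ite, mul_one, mul_zero,
    Finset.sum_ite_eq, Finset.mem_univ, if_true]
  ring

lemma partG_trace (M J : Type) [Fintype M] [DecidableEq M] [Fintype J] [DecidableEq J] :
    (partG M J).trace = (Fintype.card M : ℂ) * (Fintype.card J : ℂ)^2 := by
  have h1 : ∀ (a c : M) (b d : J),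
      (partG M J).diag ((a, b), (c, d)) = if a = c then (1:ℂ) else 0 := by
    intro a c b d; by_cases h : a = c <;> simp [partG, Matrix.diag, h]
  rw [Matrix.trace]
  simp only [Fintype.sum_prod_type, h1]
  exact quad_sum M J
lemma partG_swap_trace (M J : Type) [Fintype M] [DecidableEq M] [Fintype J] [DecidableEq J] :
    (partG M J * swapMat (M × J)).trace = (Fintype.card M : ℂ)^2 * (Fintype.card J : ℂ) := by
  have hGF : partG M J * swapMat (M × J) = Matrix.of (fun a b =>
      if a.1.1 = b.1.1 ∧ a.2.1 = b.2.1 ∧ a.1.2 = b.2.2 ∧ a.2.2 = b.1.2 then (1:ℂ) else 0) := by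
    ext a b
    simp only [Matrix.mul_apply, partG, swapMat, Matrix.of_apply, Fintype.sum_prod_type]
    simp [ite_and, Finset.sum_ite_eq, Finset.sum_ite_eq', mul_ite, mul_one, mul_zero,
      Prod.ext_iff]
  rw [hGF]
  have h1 : ∀ (a c : M) (b d : J),
      (Matrix.of (fun a b =>
        if a.1.1 = b.1.1 ∧ a.2.1 = b.2.1 ∧ a.1.2 = b.2.2 ∧ a.2.2 = b.1.2 then (1:ℂ) else 0)).diag
        ((a, b), (c, d)) = if b = d then (1:ℂ) else 0 := by
    intro a c b d; by_cases h : b = d <;> simp [Matrix.diag, h]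
  rw [Matrix.trace]
  simp only [Fintype.sum_prod_type, h1]
  simp only [Finset.sum_const, Finset.card_univ, nsmul_eq_mul, mul_ite,
    mul_one, mul_zero, Finset.sum_ite_eq, Finset.mem_univ, if_true]
  ring

/-- for a unitary 2-design `{U_1,…,U_L}` on `H_N = H_M ⊗ H_{N\M}`, the twirl
of the partial swap `F_{MM'} ⊗ 1` equals
`(1/|M|)·((|N|³−|M|²|N|)/(|N|³−|N|))·1_{NN'} + (1/|M|)·((|N|²|M|²−|N|²)/(|N|³−|N|))·F_{NN'}`. -/
theorem twirl_partial_swap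
    {M J L : Type} [Fintype M] [DecidableEq M] [Fintype J] [DecidableEq J]
    [Fintype L] [Nonempty L] [Nonempty M] [Nonempty J]
    (U : L → Matrix (M × J) (M × J) ℂ) (hU : IsUnitary2Design U) :
    (Fintype.card L : ℂ)⁻¹ • ∑ i, (U i ⊗ₖ U i)ᴴ *
        (Matrix.of fun (a : (M × J) × (M × J)) (b : (M × J) × (M × J)) =>
          if a.1.1 = b.2.1 ∧ a.2.1 = b.1.1 ∧ a.1.2 = b.1.2 ∧ a.2.2 = b.2.2
          then (1 : ℂ) else 0) * (U i ⊗ₖ U i) =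
      ((Fintype.card M : ℂ)⁻¹ *
          (((Fintype.card (M × J) : ℂ) ^ 3 - (Fintype.card M : ℂ) ^ 2 * (Fintype.card (M × J) : ℂ)) /
            ((Fintype.card (M × J) : ℂ) ^ 3 - (Fintype.card (M × J) : ℂ)))) •
        (1 : Matrix ((M × J) × (M × J)) ((M × J) × (M × J)) ℂ)
      + ((Fintype.card M : ℂ)⁻¹ *
          (((Fintype.card (M × J) : ℂ) ^ 2 * (Fintype.card M : ℂ) ^ 2 - (Fintype.card (M × J) : ℂ) ^ 2) /
            ((Fintype.card (M × J) : ℂ) ^ 3 - (Fintype.card (M × J) : ℂ)))) •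
        swapMat (M × J) := by
  have hm : (Fintype.card M : ℂ) ≠ 0 := Nat.cast_ne_zero.2 Fintype.card_ne_zero
  have hd : (Fintype.card (M × J) : ℂ) = (Fintype.card M : ℂ) * (Fintype.card J : ℂ) := by
    rw [Fintype.card_prod]; push_cast; ring
  refine (dagger_twirl U hU (partG M J)).trans ?_
  rw [partG_trace, partG_swap_trace]
  congr 1
  · congr 1
    rw [hd]
    rw [show ((Fintype.card M : ℂ) * (Fintype.card J : ℂ)) ^ 3 -
        (Fintype.card M : ℂ) ^ 2 * ((Fintype.card M : ℂ) * (Fintype.card J : ℂ))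
        = (Fintype.card M : ℂ) * ((Fintype.card M : ℂ) * (Fintype.card J : ℂ) *
            ((Fintype.card M : ℂ) * (Fintype.card J : ℂ)^2) -
          (Fintype.card M : ℂ)^2 * (Fintype.card J : ℂ)) by ring,
      mul_div_assoc, inv_mul_cancel_left₀ hm]
  · congr 1
    rw [hd]
    rw [show ((Fintype.card M : ℂ) * (Fintype.card J : ℂ)) ^ 2 * (Fintype.card M : ℂ) ^ 2 -
        ((Fintype.card M : ℂ) * (Fintype.card J : ℂ)) ^ 2
        = (Fintype.card M : ℂ) * ((Fintype.card M : ℂ) * (Fintype.card J : ℂ) *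
            ((Fintype.card M : ℂ)^2 * (Fintype.card J : ℂ)) -
          (Fintype.card M : ℂ) * (Fintype.card J : ℂ)^2) by ring,
      mul_div_assoc, inv_mul_cancel_left₀ hm]
end

section
/- A unitary 2-design {U_1,…,U_D} on H_N is a (k,ε)-quantum spectral extractor with output size m = (n+k)/2 − log(1/√ε): for all operators X on H_N, ⟨X, (ψ†∘ψ − τ†∘τ)(X)⟩ ≤ (|M|/(|N|·|D|))·⟨X,X⟩, where ψ(ρ) = (1/D) Σ_i tr_{N\M}[U_i ρ U_i†] ⊗ |i⟩⟨i| and τ(ρ) = tr[ρ]·(1_M/|M|) ⊗ (1_D/|D|), hence λ_max(ψ†∘ψ − τ†∘τ) ≤ |M|/(|N|·|D|). -/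
/-!
Write `Y_i = U_i X U_i†`. Then `ψ(X)` is block diagonal with blocks `tr_J Y_i / |D|`, and
`‖tr_J Y‖² = tr[(Y† ⊗ Y) S]` for the partial swap `S = F_M ⊗ 1_J`. The design property replaces
the average of `Y_i† ⊗ Y_i` by its Haar twirl `α 1 + β F`, whose coefficients only involve
`|tr X|²` and `‖X‖²`; since `tr S = |M||J|²` and `tr (F S) = |M|²|J|`,
`(1/|D|) Σ_i ‖tr_J Y_i‖² = (|M|(|J|² - 1)|tr X|² + |J|(|M|² - 1)‖X‖²) / (|N|² - 1)`.
This falls short of `|tr X|²/|M| + ‖X‖²/|J|` by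
`((|M|² - 1)|tr X|²/|M| + (|J|² - 1)‖X‖²/|J|) / (|N|² - 1) ≥ 0`, and `|tr X|²/|M|` is exactly
`|D| ‖τ(X)‖²`.
-/

open Matrix Finset
open scoped Kronecker

/-- Squared Hilbert–Schmidt norm. -/
noncomputable def hsNormSq {n : Type} [Fintype n] (A : Matrix n n ℂ) : ℝ :=
  ((Aᴴ * A).trace).re

section PartialTrace

variable {R : Type*} {M J : Type} [Fintype J]

def partialTraceRight [AddCommMonoid R] (Y : Matrix (M × J) (M × J) R) : Matrix M M R :=
  of fun m m' => ∑ j, Y (m, j) (m', j)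

lemma partialTraceRight_conjTranspose [AddCommMonoid R] [StarAddMonoid R]
    (Y : Matrix (M × J) (M × J) R) :
    partialTraceRight Yᴴ = (partialTraceRight Y)ᴴ := by
  ext m m'
  simp [partialTraceRight, conjTranspose_apply, star_sum]

lemma partialTraceRight_one [DecidableEq M] [DecidableEq J] [Semiring R] :
    partialTraceRight (1 : Matrix (M × J) (M × J) R) = (Fintype.card J : R) • 1 := by
  ext m m'
  by_cases h : m = m' <;> simp [partialTraceRight, one_apply, h]

variable [Fintype M] [DecidableEq M] [DecidableEq J]

/-- `F_M ⊗ 1_J`: the swap of the two `M`-factors of `(M × J) ⊗ (M × J)`. -/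
def partialSwap (M J : Type) [DecidableEq M] [DecidableEq J] [Zero R] [One R] :
    Matrix ((M × J) × (M × J)) ((M × J) × (M × J)) R :=
  of fun p q => if p = ((q.2.1, q.1.2), (q.1.1, q.2.2)) then 1 else 0

lemma trace_kronecker_mul_partialSwap [CommSemiring R] (A B : Matrix (M × J) (M × J) R) :
    ((A ⊗ₖ B) * partialSwap M J).trace = (partialTraceRight A * partialTraceRight B).trace := by
  simp only [trace, Matrix.diag, mul_apply, partialSwap, of_apply, mul_ite, mul_one, mul_zero,
    Finset.sum_ite_eq', Finset.mem_univ, if_true, kroneckerMap_apply, partialTraceRight,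
    Fintype.sum_prod_type, Finset.sum_mul_sum]
  exact Finset.sum_congr rfl fun _ _ => Finset.sum_comm

lemma trace_partialSwap [CommSemiring R] :
    (partialSwap M J : Matrix _ _ R).trace = Fintype.card M * Fintype.card J ^ 2 := by
  have := trace_kronecker_mul_partialSwap (R := R) (1 : Matrix (M × J) (M × J) R) 1
  rw [one_kronecker_one, one_mul, partialTraceRight_one, smul_mul_smul_comm, one_mul,
    trace_smul, trace_one] at this
  rw [this, smul_eq_mul]
  ring

lemma trace_swapMat_mul_partialSwap :
    (swapMat (M × J) * partialSwap M J).trace = (Fintype.card M : ℂ) ^ 2 * Fintype.card J := by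
  simp only [trace, Matrix.diag, mul_apply, partialSwap, of_apply, mul_ite, mul_one, mul_zero,
    Finset.sum_ite_eq', Finset.mem_univ, if_true, swapMat, Fintype.sum_prod_type, Prod.mk.injEq]
  simp [eq_comm]
  ring

end PartialTrace

lemma trace_kronecker_mul_swapMat {H : Type} [Fintype H] [DecidableEq H] (A B : Matrix H H ℂ) :
    ((A ⊗ₖ B) * swapMat H).trace = (A * B).trace := by
  have hF (p q : H × H) : swapMat H q p = if q = p.swap then 1 else 0 := by
    simp [swapMat, Prod.ext_iff]
  simp only [trace, Matrix.diag, mul_apply, hF, mul_ite, mul_one, mul_zero, Finset.sum_ite_eq',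
    Finset.mem_univ, if_true, kroneckerMap_apply, Fintype.sum_prod_type, Prod.fst_swap, Prod.snd_swap]

section HilbertSchmidt

open scoped ComplexOrder

variable {n : Type} [Fintype n]

lemma hsNormSq_nonneg (A : Matrix n n ℂ) : 0 ≤ hsNormSq A :=
  (Complex.nonneg_iff.mp (posSemidef_conjTranspose_mul_self A).trace_nonneg).1

lemma ofReal_hsNormSq (A : Matrix n n ℂ) : (hsNormSq A : ℂ) = (Aᴴ * A).trace :=
  Complex.ext rfl (Complex.nonneg_iff.mp (posSemidef_conjTranspose_mul_self A).trace_nonneg).2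

lemma hsNormSq_smul (c : ℂ) (A : Matrix n n ℂ) :
    hsNormSq (c • A) = Complex.normSq c * hsNormSq A := by
  rw [hsNormSq, conjTranspose_smul, smul_mul_smul_comm, trace_smul, smul_eq_mul,
    Complex.star_def, ← Complex.normSq_eq_conj_mul_self, Complex.re_ofReal_mul, hsNormSq]

lemma hsNormSq_diagonal_const [DecidableEq n] (c : ℂ) :
    hsNormSq (diagonal fun _ : n => c) = Fintype.card n * Complex.normSq c := by
  rw [← smul_one_eq_diagonal, hsNormSq_smul, hsNormSq, conjTranspose_one, one_mul, trace_one]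
  simp [mul_comm]

lemma hsNormSq_blockDiagonal {o : Type} [Fintype o] [DecidableEq o] (f : o → Matrix n n ℂ) :
    hsNormSq (blockDiagonal f) = ∑ k, hsNormSq (f k) := by
  rw [hsNormSq, blockDiagonal_conjTranspose, ← blockDiagonal_mul, trace_blockDiagonal,
    Complex.re_sum]
  rfl

end HilbertSchmidt

lemma kronecker_mul_kronecker_mul_conjTranspose {R l m n p : Type*} [CommSemiring R] [StarRing R]
    [Fintype m] [Fintype n] (U : Matrix l m R) (V : Matrix p n R) (A : Matrix m m R)
    (B : Matrix n n R) :
    (U ⊗ₖ V) * (A ⊗ₖ B) * (U ⊗ₖ V)ᴴ = (U * A * Uᴴ) ⊗ₖ (V * B * Vᴴ) := by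
  rw [conjTranspose_kronecker, ← mul_kronecker_mul, ← mul_kronecker_mul]

namespace IsUnitary2Design

section

variable {H L : Type} [Fintype H] [DecidableEq H] [Fintype L] {U : L → Matrix H H ℂ}

/-- For `|H| = 1` the Haar formula divides by `|H|³ - |H| = 0` and returns `0`, but the twirl
of `1` is `1`. -/
lemma two_le_card [Nonempty H] [Nonempty L] (hU : IsUnitary2Design U) :
    2 ≤ Fintype.card H := by
  by_contra! hH
  replace hH : Fintype.card H = 1 := by have := Fintype.card_pos (α := H); omega
  have hunitary (i : L) : (U i ⊗ₖ U i) * (U i ⊗ₖ U i)ᴴ = 1 := by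
    rw [← star_eq_conjTranspose]
    exact Unitary.mul_star_self_of_mem (kronecker_mem_unitary (hU.1 i) (hU.1 i))
  have htwirl := hU.2 1
  have hL : (Fintype.card L : ℂ) ≠ 0 := Nat.cast_ne_zero.mpr Fintype.card_ne_zero
  simp only [mul_one, hunitary, Finset.sum_const, Finset.card_univ, hH] at htwirl
  rw [← Nat.cast_smul_eq_nsmul ℂ, smul_smul, inv_mul_cancel₀ hL, one_smul] at htwirl
  norm_num at htwirl

end

section

variable {M J D : Type} [Fintype M] [DecidableEq M] [Fintype J] [DecidableEq J] [Fintype D]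
  {U : D → Matrix (M × J) (M × J) ℂ}

lemma average_hsNormSq_partialTraceRight [Nonempty M] [Nonempty J] (hU : IsUnitary2Design U)
    (X : Matrix (M × J) (M × J) ℂ) :
    (Fintype.card D : ℝ)⁻¹ * ∑ i, hsNormSq (partialTraceRight (U i * X * (U i)ᴴ)) =
      ((Fintype.card M : ℝ) * ((Fintype.card J : ℝ) ^ 2 - 1) * Complex.normSq X.trace
        + (Fintype.card J : ℝ) * ((Fintype.card M : ℝ) ^ 2 - 1) * hsNormSq X)
        / (((Fintype.card M : ℝ) * Fintype.card J) ^ 2 - 1) := by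
  have htwirl := congrArg (fun T => (T * partialSwap M J).trace) (hU.2 (Xᴴ ⊗ₖ X))
  have hconj (i : D) : (U i ⊗ₖ U i) * (Xᴴ ⊗ₖ X) * (U i ⊗ₖ U i)ᴴ
      = (U i * X * (U i)ᴴ)ᴴ ⊗ₖ (U i * X * (U i)ᴴ) := by
    rw [kronecker_mul_kronecker_mul_conjTranspose]
    simp only [conjTranspose_mul, conjTranspose_conjTranspose, Matrix.mul_assoc]
  simp only [hconj, smul_mul, add_mul, Matrix.one_mul, Finset.sum_mul, trace_smul, trace_add,
    trace_sum, trace_kronecker_mul_partialSwap, partialTraceRight_conjTranspose,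
    ← ofReal_hsNormSq, trace_partialSwap, trace_swapMat_mul_partialSwap,
    trace_kronecker, trace_kronecker_mul_swapMat, trace_conjTranspose, Complex.star_def,
    ← Complex.normSq_eq_conj_mul_self, smul_eq_mul, Fintype.card_prod, Nat.cast_mul] at htwirl
  apply Complex.ofReal_injective
  push_cast
  set N : ℂ := (Fintype.card M : ℂ) * Fintype.card J
  have hN : N ≠ 0 := by simp [N]
  rw [htwirl, div_mul_eq_mul_div, div_mul_eq_mul_div, ← add_div,
    show N ^ 3 - N = N * (N ^ 2 - 1) by ring, ← mul_div_mul_left _ (N ^ 2 - 1) hN]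
  congr 1
  ring

lemma average_hsNormSq_partialTraceRight_sub_le [Nonempty M] [Nonempty J] [Nonempty D]
    (hU : IsUnitary2Design U) (X : Matrix (M × J) (M × J) ℂ) :
    (Fintype.card D : ℝ)⁻¹ * ∑ i, hsNormSq (partialTraceRight (U i * X * (U i)ᴴ))
      - Complex.normSq X.trace / Fintype.card M ≤ hsNormSq X / Fintype.card J := by
  rw [hU.average_hsNormSq_partialTraceRight X]
  have hab : (2 : ℝ) ≤ Fintype.card M * Fintype.card J := by
    exact_mod_cast Fintype.card_prod M J ▸ hU.two_le_card
  have ha : (1 : ℝ) ≤ Fintype.card M := Nat.one_le_cast.mpr Fintype.card_pos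
  have hb : (1 : ℝ) ≤ Fintype.card J := Nat.one_le_cast.mpr Fintype.card_pos
  set a : ℝ := (Fintype.card M : ℝ)
  set b : ℝ := (Fintype.card J : ℝ)
  set c := Complex.normSq X.trace
  set s := hsNormSq X
  have hc : 0 ≤ c := Complex.normSq_nonneg _
  have hs : 0 ≤ s := hsNormSq_nonneg X
  have ha0 : a ≠ 0 := by positivity
  have hb0 : b ≠ 0 := by positivity
  have hP : 0 < (a * b) ^ 2 - 1 := by nlinarith
  have hgap : s / b + c / a - (a * (b ^ 2 - 1) * c + b * (a ^ 2 - 1) * s) / ((a * b) ^ 2 - 1)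
      = (c * (a ^ 2 - 1) / a + s * (b ^ 2 - 1) / b) / ((a * b) ^ 2 - 1) := by
    rw [eq_div_iff hP.ne', sub_mul, div_mul_cancel₀ _ hP.ne']
    field_simp
    ring
  have : 0 ≤ (c * (a ^ 2 - 1) / a + s * (b ^ 2 - 1) / b) / ((a * b) ^ 2 - 1) := by
    have : 0 ≤ a ^ 2 - 1 := by nlinarith
    have : 0 ≤ b ^ 2 - 1 := by nlinarith
    positivity
  linarith

end

end IsUnitary2Design

/-- a unitary 2-design `{U_1,…,U_D}` on `H_N = H_M ⊗ H_{N\M}` is a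
(k,ε)-quantum spectral extractor with `m = (n+k)/2 − log(1/√ε)`: for all operators `X`,
`⟨X, (ψ†∘ψ − τ†∘τ)(X)⟩ ≤ (|M|/(|N||D|))·⟨X,X⟩`, i.e.
`λ_max(ψ†∘ψ − τ†∘τ) ≤ |M|/(|N||D|)` for the extractor map
`ψ(ρ) = (1/D) Σ_i tr_{N\M}[U_i ρ U_i†] ⊗ |i⟩⟨i|` and `τ(ρ) = tr[ρ]·1_{MD}/(|M||D|)`. -/
theorem unitary_2_design_is_quantum_spectral_extractor
    {M J D : Type} [Fintype M] [DecidableEq M] [Fintype J] [DecidableEq J]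
    [Fintype D] [DecidableEq D] [Nonempty M] [Nonempty J] [Nonempty D]
    (U : D → Matrix (M × J) (M × J) ℂ) (hU : IsUnitary2Design U) :
    ∀ X : Matrix (M × J) (M × J) ℂ,
      hsNormSq (Matrix.of fun (mi : M × D) (mi' : M × D) =>
          if mi.2 = mi'.2 then
            ((Fintype.card D : ℂ))⁻¹ * ∑ t : J, (U mi.2 * X * (U mi.2)ᴴ) (mi.1, t) (mi'.1, t)
          else 0)
      - hsNormSq (Matrix.of fun (mi : M × D) (mi' : M × D) =>
          if mi = mi' then X.trace / ((Fintype.card M : ℂ) * (Fintype.card D : ℂ)) else 0)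
      ≤ (Fintype.card M : ℝ) / ((Fintype.card (M × J) : ℝ) * (Fintype.card D : ℝ)) *
          hsNormSq X := by
  intro X
  change hsNormSq (blockDiagonal fun i =>
        (Fintype.card D : ℂ)⁻¹ • partialTraceRight (U i * X * (U i)ᴴ))
      - hsNormSq (diagonal fun _ => X.trace / ((Fintype.card M : ℂ) * Fintype.card D)) ≤ _
  rw [hsNormSq_blockDiagonal, hsNormSq_diagonal_const]
  simp only [hsNormSq_smul, ← Finset.mul_sum, Complex.normSq_inv, Complex.normSq_natCast,
    Complex.normSq_div, Complex.normSq_mul, Fintype.card_prod, Nat.cast_mul]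
  have hD : (0 : ℝ) < Fintype.card D := Nat.cast_pos.mpr Fintype.card_pos
  have hM : (0 : ℝ) < Fintype.card M := Nat.cast_pos.mpr Fintype.card_pos
  have hJ : (0 : ℝ) < Fintype.card J := Nat.cast_pos.mpr Fintype.card_pos
  calc _ = (Fintype.card D : ℝ)⁻¹ * ((Fintype.card D : ℝ)⁻¹
          * ∑ i, hsNormSq (partialTraceRight (U i * X * (U i)ᴴ))
          - Complex.normSq X.trace / Fintype.card M) := by field_simp
    _ ≤ (Fintype.card D : ℝ)⁻¹ * (hsNormSq X / Fintype.card J) := by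
        gcongr
        exact hU.average_hsNormSq_partialTraceRight_sub_le X
    _ = _ := by field_simp
end

section
/- Every density operator ρ_N on a finite-dimensional Hilbert space with H_min(N)_ρ = −log λ_max(ρ_N) ≥ k (k = log of an integer 2^k dividing considerations aside, assume 2^k integer) can be written as a convex combination ρ_N = Σ_j p_j ρ_N^j of flat k-sources, i.e., density operators ρ_N^j each having exactly 2^k nonzero eigenvalues all equal to 2^{−k}. -/
/-!
Diagonalise `ρ = U diag(λ) Uᴴ`. The constraints `0 ≤ λ ≤ 1/K`, `∑ λ = 1` say that `x = K λ` lies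
in the hypersimplex `{x ∈ [0,1]ⁿ | ∑ x = K}`, and conjugating `diag(1_T)` by `U` turns a `K`-subset
`T` into a rank-`K` orthogonal projection, so it suffices that the hypersimplex is the convex hull
of the indicator vectors of `K`-subsets. For that, fix a `K`-subset `R` of the rows and spread `x`
evenly over the rows in `R` and `1 - x` evenly over the others: the result is doubly stochastic,
hence by Birkhoff a convex combination of permutation matrices, and summing the rows in `R` of the
permutation matrix of `σ` gives the indicator of `σ(R)`.
-/

open Matrix Finset
open scoped ComplexOrder

lemma sum_permMatrix_apply_eq_ite {n : Type*} [DecidableEq n] (R : Finset n) (σ : Equiv.Perm n)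
    (i : n) : ∑ r ∈ R, σ.permMatrix ℝ r i = if i ∈ R.map σ.toEmbedding then 1 else 0 := by
  simp [PEquiv.toMatrix_apply, ← Equiv.eq_symm_apply]

lemma sum_const_div_card {ι : Type*} {s : Finset ι} {a : ℝ} (ha : #s = 0 → a = 0) :
    ∑ _ ∈ s, a / #s = a := by
  rcases eq_or_ne #s 0 with hs | hs
  · simp [hs, ha hs]
  · rw [sum_const, nsmul_eq_mul, mul_div_cancel₀ _ (by exact_mod_cast hs)]

lemma exists_fin_of_mem_convexHull {R E : Type*} [Field R] [LinearOrder R] [IsStrictOrderedRing R]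
    [AddCommGroup E] [Module R E] {s : Set E} {x : E} (hx : x ∈ convexHull R s) :
    ∃ (m : ℕ) (w : Fin m → R) (z : Fin m → E),
      (∀ j, 0 ≤ w j) ∧ ∑ j, w j = 1 ∧ (∀ j, z j ∈ s) ∧ ∑ j, w j • z j = x := by
  obtain ⟨ι, _, w, z, hw0, hw1, hz, rfl⟩ := mem_convexHull_iff_exists_fintype.1 hx
  let e := (Fintype.equivFin ι).symm
  exact ⟨_, w ∘ e, z ∘ e, fun _ => hw0 _, (e.sum_comp w).trans hw1, fun _ => hz _,
    e.sum_comp fun i => w i • z i⟩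

section Hypersimplex

variable {n : Type*} [Fintype n] [DecidableEq n]

variable (n) in
def hypersimplexVertices (K : ℕ) : Set (n → ℝ) :=
  {y | ∃ T : Finset n, #T = K ∧ y = fun i => if i ∈ T then 1 else 0}

noncomputable def hypersimplexLift (R : Finset n) (x : n → ℝ) : Matrix n n ℝ :=
  of fun r i => if r ∈ R then x i / #R else (1 - x i) / #Rᶜ

lemma sum_hypersimplexLift_apply {R : Finset n} {x : n → ℝ} (h0 : ∀ i, 0 ≤ x i)
    (hsum : ∑ i, x i = #R) (i : n) : ∑ r ∈ R, hypersimplexLift R x r i = x i := by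
  have hxR : x i ≤ #R := hsum ▸ single_le_sum (fun j _ => h0 j) (mem_univ i)
  simp only [hypersimplexLift, of_apply]
  rw [sum_congr rfl fun r hr => if_pos hr]
  exact sum_const_div_card fun h => by linarith [h0 i, show (#R : ℝ) = 0 by exact_mod_cast h]

lemma hypersimplexLift_mem_doublyStochastic {R : Finset n} {x : n → ℝ}
    (h0 : ∀ i, 0 ≤ x i) (h1 : ∀ i, x i ≤ 1) (hsum : ∑ i, x i = #R) :
    hypersimplexLift R x ∈ doublyStochastic ℝ n := by
  have hsum' : ∑ i, (1 - x i) = #Rᶜ := by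
    rw [sum_sub_distrib, hsum, card_compl, Nat.cast_sub (card_le_univ R)]
    simp
  refine mem_doublyStochastic_iff_sum.2 ⟨fun r i => ?_, fun r => ?_, fun i => ?_⟩
  · by_cases hr : r ∈ R
    · simpa [hypersimplexLift, hr] using div_nonneg (h0 i) (Nat.cast_nonneg _)
    · simpa [hypersimplexLift, hr] using div_nonneg (sub_nonneg.2 (h1 i)) (Nat.cast_nonneg _)
  · by_cases hr : r ∈ R
    · simp [hypersimplexLift, hr, ← sum_div, hsum, (card_pos.2 ⟨r, hr⟩).ne']
    · simp [hypersimplexLift, hr, ← sum_div, hsum', (card_pos.2 ⟨r, mem_compl.2 hr⟩).ne']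
  · have hxRc : 1 - x i ≤ #Rᶜ :=
      hsum' ▸ single_le_sum (fun j _ => sub_nonneg.2 (h1 j)) (mem_univ i)
    rw [← sum_add_sum_compl R, sum_hypersimplexLift_apply h0 hsum i]
    simp only [hypersimplexLift, of_apply]
    rw [sum_congr rfl fun r hr => if_neg (mem_compl.1 hr), sum_const_div_card fun h => by
      linarith [h1 i, show (#Rᶜ : ℝ) = 0 by exact_mod_cast h]]
    ring

theorem mem_convexHull_hypersimplexVertices {K : ℕ} {x : n → ℝ} (h0 : ∀ i, 0 ≤ x i)
    (h1 : ∀ i, x i ≤ 1) (hsum : ∑ i, x i = K) : x ∈ convexHull ℝ (hypersimplexVertices n K) := by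
  have hK : (K : ℝ) ≤ Fintype.card n := hsum ▸ (sum_le_sum fun i _ => h1 i).trans (by simp)
  obtain ⟨R, -, rfl⟩ := exists_subset_card_eq (s := (univ : Finset n)) (n := K)
    (by rw [card_univ]; exact_mod_cast hK)
  obtain ⟨w, hw0, hw1, hwM⟩ := exists_eq_sum_perm_of_mem_doublyStochastic
    (hypersimplexLift_mem_doublyStochastic h0 h1 hsum)
  refine mem_convexHull_of_exists_fintype w (fun σ i => if i ∈ R.map σ.toEmbedding then 1 else 0)
    hw0 hw1 (fun σ => ⟨_, card_map _, rfl⟩) (funext fun i => ?_)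
  calc (∑ σ, w σ • fun i => if i ∈ R.map σ.toEmbedding then (1 : ℝ) else 0) i
      = ∑ σ, w σ * ∑ r ∈ R, σ.permMatrix ℝ r i := by
        simp only [Finset.sum_apply, Pi.smul_apply, smul_eq_mul, sum_permMatrix_apply_eq_ite]
    _ = ∑ r ∈ R, hypersimplexLift R x r i := by
        simp only [← hwM, Matrix.sum_apply, Matrix.smul_apply, smul_eq_mul, mul_sum]
        exact sum_comm
    _ = x i := sum_hypersimplexLift_apply h0 hsum i

end Hypersimplex

section FlatSources

variable {n : Type*} [Fintype n] [DecidableEq n]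

lemma Matrix.IsHermitian.eigenvalues_le_of_posSemidef_smul_one_sub {𝕜 : Type*} [RCLike 𝕜]
    {A : Matrix n n 𝕜} (hA : A.IsHermitian) {c : ℝ} (h : ((c : 𝕜) • 1 - A).PosSemidef) (i : n) :
    hA.eigenvalues i ≤ c := by
  have hdiag : (hA.eigenvectorUnitary : Matrix n n 𝕜)ᴴ * ((c : 𝕜) • 1 - A) * hA.eigenvectorUnitary
      = diagonal fun i => (c : 𝕜) - hA.eigenvalues i := by
    rw [← star_eq_conjTranspose, ← Unitary.conjStarAlgAut_star_apply (S := 𝕜),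
      map_sub, map_smul, map_one, hA.conjStarAlgAut_star_eigenvectorUnitary,
      smul_one_eq_diagonal, diagonal_sub]
    rfl
  have hnonneg := h.conjTranspose_mul_mul_same (hA.eigenvectorUnitary : Matrix n n 𝕜)
  rw [hdiag, posSemidef_diagonal_iff] at hnonneg
  have hi : (0 : 𝕜) ≤ ((c - hA.eigenvalues i : ℝ) : 𝕜) := by simpa using hnonneg i
  simpa using RCLike.ofReal_nonneg.1 hi

lemma conjStarAlgAut_diagonal_indicator {𝕜 : Type*} [RCLike 𝕜] (u : unitary (Matrix n n 𝕜))
    (T : Finset n) :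
    let P := Unitary.conjStarAlgAut 𝕜 _ u (diagonal fun i => if i ∈ T then 1 else 0)
    P.IsHermitian ∧ P * P = P ∧ P.rank = #T := by
  set D : Matrix n n 𝕜 := diagonal fun i => if i ∈ T then 1 else 0
  have hD : D.IsHermitian := isHermitian_diagonal_of_self_adjoint _ <| funext fun i => by
    by_cases hi : i ∈ T <;> simp [hi]
  have hDD : D * D = D := by
    rw [diagonal_mul_diagonal]
    congr 1
    ext i
    by_cases hi : i ∈ T <;> simp [hi]
  refine ⟨(hD.isSelfAdjoint.map _ : IsSelfAdjoint _), by rw [← map_mul, hDD], ?_⟩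
  rw [Unitary.conjStarAlgAut_apply, ← Unitary.coe_star]
  simp [-isUnit_iff_ne_zero, -Unitary.coe_star, D, rank_diagonal, Fintype.card_subtype]

variable (n) in
def flatSources (K : ℕ) : Set (Matrix n n ℂ) :=
  {σ | ∃ P : Matrix n n ℂ, P.IsHermitian ∧ P * P = P ∧ P.rank = K ∧ σ = (K : ℂ)⁻¹ • P}

theorem mem_convexHull_flatSources {K : ℕ} (hK : 0 < K) {ρ : Matrix n n ℂ} (hρ : ρ.PosSemidef)
    (hρtr : ρ.trace = 1) (hmin : ((K : ℂ)⁻¹ • (1 : Matrix n n ℂ) - ρ).PosSemidef) :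
    ρ ∈ convexHull ℝ (flatSources n K) := by
  have hH := hρ.isHermitian
  set Φ := Unitary.conjStarAlgAut ℝ _ hH.eigenvectorUnitary
  have hK' : (K : ℝ) ≠ 0 := by exact_mod_cast hK.ne'
  let ψ : (n → ℝ) →ₗ[ℝ] Matrix n n ℂ := (K : ℂ)⁻¹ • (Φ.toAlgEquiv.toLinearMap ∘ₗ
    diagonalLinearMap n ℝ ℂ ∘ₗ LinearMap.compLeft Complex.ofRealCLM.toLinearMap n)
  have hψ : ∀ y, ψ y = (K : ℂ)⁻¹ • Φ (diagonal fun i => (y i : ℂ)) := fun y => rfl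
  have hx : (fun i => K * hH.eigenvalues i) ∈ convexHull ℝ (hypersimplexVertices n K) := by
    refine mem_convexHull_hypersimplexVertices (fun i => ?_) (fun i => ?_) ?_
    · exact mul_nonneg (Nat.cast_nonneg K) (hρ.eigenvalues_nonneg i)
    · have hle := hH.eigenvalues_le_of_posSemidef_smul_one_sub (c := (K : ℝ)⁻¹)
        (by simpa using hmin) i
      calc (K : ℝ) * hH.eigenvalues i ≤ K * (K : ℝ)⁻¹ := by gcongr
        _ = 1 := mul_inv_cancel₀ hK'
    · have hsum : ∑ i, hH.eigenvalues i = 1 := by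
        apply RCLike.ofReal_injective (K := ℂ)
        simpa using hH.trace_eq_sum_eigenvalues.symm.trans hρtr
      rw [← mul_sum, hsum, mul_one]
  have hρψ : ρ = ψ fun i => K * hH.eigenvalues i := by
    have hdiag : (diagonal fun i => ((K * hH.eigenvalues i : ℝ) : ℂ))
        = (K : ℝ) • diagonal (RCLike.ofReal ∘ hH.eigenvalues) := by
      rw [← diagonal_smul]
      congr 1
      ext i
      simp
    rw [hψ, hdiag, map_smul, ← Complex.coe_smul, smul_smul, Complex.ofReal_natCast,
      inv_mul_cancel₀ (by exact_mod_cast hK.ne'), one_smul]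
    exact hH.spectral_theorem
  have hψS : ψ '' hypersimplexVertices n K ⊆ flatSources n K := by
    rintro _ ⟨_, ⟨T, hT, rfl⟩, rfl⟩
    obtain ⟨hP, hPP, hPrank⟩ := conjStarAlgAut_diagonal_indicator (𝕜 := ℂ) hH.eigenvectorUnitary T
    exact ⟨_, hP, hPP, hT ▸ hPrank, by simp [hψ, Φ, apply_ite]⟩
  rw [hρψ]
  exact convexHull_mono hψS (LinearMap.image_convexHull ψ _ ▸ Set.mem_image_of_mem ψ hx)

end FlatSources

theorem flat_source_decomposition_general
    {n : Type} [Fintype n] [DecidableEq n]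
    (K : ℕ) (hK : 0 < K)
    (ρ : Matrix n n ℂ) (hρ : ρ.PosSemidef) (hρtr : ρ.trace = 1)
    -- H_min(N)_ρ ≥ k = log K, i.e. λ_max(ρ) ≤ 1/K = 2^{−k}
    (hmin : (((K : ℂ))⁻¹ • (1 : Matrix n n ℂ) - ρ).PosSemidef) :
    ∃ (s : ℕ) (p : Fin s → ℝ) (P : Fin s → Matrix n n ℂ),
      (∀ j, 0 ≤ p j) ∧ (∑ j, p j = 1) ∧
      (∀ j, (P j).IsHermitian ∧ P j * P j = P j ∧ (P j).rank = K) ∧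
      ρ = ∑ j, ((p j : ℂ) * ((K : ℂ))⁻¹) • P j := by
  obtain ⟨s, p, σ, hp0, hp1, hσ, rfl⟩ :=
    exists_fin_of_mem_convexHull (mem_convexHull_flatSources hK hρ hρtr hmin)
  choose P hP hPP hPrank hσP using hσ
  refine ⟨s, p, P, hp0, hp1, fun j => ⟨hP j, hPP j, hPrank j⟩, sum_congr rfl fun j _ => ?_⟩
  rw [hσP, ← Complex.coe_smul, smul_smul]

/-- every density operator `ρ` with `H_min(N)_ρ = −log λ_max(ρ) ≥ k`
(i.e. `λ_max(ρ) ≤ 2^{−k}`, with `K = 2^k` a positive integer) is a convex combination of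
flat `k`-sources, i.e. of states `2^{−k} P` for orthogonal projections `P` of rank `2^k`. -/
theorem flat_source_decomposition
    {n : Type} [Fintype n] [DecidableEq n] [Nonempty n]
    (K : ℕ) (hK : 0 < K) (hKn : K ≤ Fintype.card n)
    (ρ : Matrix n n ℂ) (hρ : ρ.PosSemidef) (hρtr : ρ.trace = 1)
    -- H_min(N)_ρ ≥ k = log K, i.e. λ_max(ρ) ≤ 1/K = 2^{−k}
    (hmin : (((K : ℂ))⁻¹ • (1 : Matrix n n ℂ) - ρ).PosSemidef) :
    ∃ (s : ℕ) (p : Fin s → ℝ) (P : Fin s → Matrix n n ℂ),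
      (∀ j, 0 ≤ p j) ∧ (∑ j, p j = 1) ∧
      (∀ j, (P j).IsHermitian ∧ P j * P j = P j ∧ (P j).rank = K) ∧
      ρ = ∑ j, ((p j : ℂ) * ((K : ℂ))⁻¹) • P j :=
  flat_source_decomposition_general K hK ρ hρ hρtr hmin
end

section
/- Quantum extractor trace-norm bound from the weighted 2-norm: for any extractor superoperator ψ and reference map τ (acting on the N system), and any cq or fully quantum state ρ_{NR}, ‖((ψ − τ) ⊗ id_R)(ρ_{NR})‖_1 ≤ 2·√(|M|·|D|) · √(⟨ρ̃_{NR}, ((ψ†∘ψ − τ†∘τ) ⊗ id_R)(ρ̃_{NR})⟩), where ρ̃_{NR} = (1 ⊗ ρ_R^{−1/4}) ρ_{NR} (1 ⊗ ρ_R^{−1/4}) and the output space of ψ, τ has dimension |M|·|D|. -/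
open Matrix Finset
open scoped ComplexOrder Kronecker

/-- Trace norm: the sum of the singular values of `A`. -/
noncomputable def traceNorm {n : Type} [Fintype n] [DecidableEq n] (A : Matrix n n ℂ) : ℝ :=
  ∑ i, Real.sqrt ((Matrix.posSemidef_conjTranspose_mul_self A).1.eigenvalues i)

/-- Partial trace over the first system. -/
noncomputable def ptraceFst {n r : Type} [Fintype n] [Fintype r]
    (A : Matrix (n × r) (n × r) ℂ) : Matrix r r ℂ :=
  Matrix.of fun a b => ∑ x : n, A (x, a) (x, b)

/-- The extension `Φ ⊗ id_R` of a superoperator `Φ` on the `N` system. -/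
noncomputable def extendR {n o r : Type} [Fintype n] [Fintype o] [Fintype r]
    (Φ : Matrix n n ℂ →ₗ[ℂ] Matrix o o ℂ)
    (X : Matrix (n × r) (n × r) ℂ) : Matrix (o × r) (o × r) ℂ :=
  Matrix.of fun a b => Φ (Matrix.of fun x y => X (x, a.2) (y, b.2)) a.1 b.1

/-!
Write `X = ((ψ - τ) ⊗ id)(ρ)`. It is Hermitian and traceless, so `‖X‖₁ = 2 tr(X E)` where `E` is
the spectral projection onto its positive part. With `s = ρ_R^{1/4}` (on the support of `ρ_R`) one
has `ρ = (1 ⊗ s) ρ̃ (1 ⊗ s)`, so `X = G Y G` with `G = 1 ⊗ s` and `Y = ((ψ - τ) ⊗ id)(ρ̃)`, and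
`tr(X E) = ⟨Y, G E G⟩`. Cauchy–Schwarz bounds this by `‖Y‖₂ ‖G E G‖₂`. Since `0 ≤ E ≤ 1`,
`‖G E G‖₂² ≤ tr G⁴ = tr(1 ⊗ ρ_R) = |M||D|`; and since `τ ⊗ id` only depends on the marginal of its
input, `‖Y‖₂² = ‖(ψ ⊗ id)(ρ̃)‖₂² - ‖(τ ⊗ id)(ρ̃)‖₂²`.
-/

open scoped MatrixOrder

section PseudoInverse

variable {R : Type*} [Ring R] {a t : R}

open scoped IsMulCommutative in
lemma Commute.mul_pow_three_pow_four (hc : Commute a t) (h : a * t ^ 4 * a = a) :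
    (a * t ^ 3) ^ 4 = a := by
  -- the identity is checked in the commutative subring generated by `a` and `t`
  have := Subring.isMulCommutative_closure (s := {a, t}) (by
    simp only [Set.mem_insert_iff, Set.mem_singleton_iff]
    rintro x (rfl | rfl) y (rfl | rfl) <;> first | rfl | exact hc.eq | exact hc.eq.symm)
  let a' : Subring.closure {a, t} := ⟨a, Subring.subset_closure (by simp)⟩
  let t' : Subring.closure {a, t} := ⟨t, Subring.subset_closure (by simp)⟩
  have h' : a' * t' ^ 4 * a' = a' := Subtype.ext h
  exact congrArg Subtype.val
    (by linear_combination (a' ^ 2 * t' ^ 8 + a' * t' ^ 4 + 1) * h' : (a' * t' ^ 3) ^ 4 = a')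

lemma Commute.mul_mul_mul_pow_three (hc : Commute a t) (h : a * t ^ 4 * a = a) :
    a * (t * (a * t ^ 3)) = a := by
  rw [← mul_assoc t, ← hc.eq, mul_assoc, ← pow_succ', (hc.pow_right 4).eq, ← mul_assoc, h]

end PseudoInverse

section HermitianMaps

open ComplexStarModule

lemma LinearMap.map_star_of_isSelfAdjoint {A B : Type*} [AddCommGroup A] [Module ℂ A]
    [StarAddMonoid A] [StarModule ℂ A] [AddCommGroup B] [Module ℂ B] [StarAddMonoid B]
    [StarModule ℂ B] (Φ : A →ₗ[ℂ] B) (hΦ : ∀ a, IsSelfAdjoint a → IsSelfAdjoint (Φ a)) (a : A) :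
    Φ (star a) = star (Φ a) := by
  rw [← realPart_add_I_smul_imaginaryPart a]
  simp only [star_add, star_smul, map_add, map_smul, map_neg, (ℜ a).2.star_eq, (ℑ a).2.star_eq,
    (hΦ _ (ℜ a).2).star_eq, (hΦ _ (ℑ a).2).star_eq, Complex.star_def, Complex.conj_I, neg_smul]

end HermitianMaps

section TraceNormDuality

variable {m : Type} [Fintype m] [DecidableEq m]

lemma Matrix.IsHermitian.trace_cfc {A : Matrix m m ℂ} (hA : A.IsHermitian) (f : ℝ → ℝ) :
    (cfc f A).trace = ∑ i, (f (hA.eigenvalues i) : ℂ) := by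
  rw [hA.cfc_eq, IsHermitian.cfc, Unitary.conjStarAlgAut_apply, trace_mul_cycle,
    Unitary.coe_star_mul_self, one_mul, trace_diagonal]
  rfl

lemma traceNorm_eq_re_trace_abs (A : Matrix m m ℂ) : traceNorm A = (CFC.abs A).trace.re := by
  have hB := posSemidef_conjTranspose_mul_self A
  rw [CFC.abs, star_eq_conjTranspose, CFC.sqrt_eq_real_sqrt _ hB.nonneg, cfcₙ_eq_cfc,
    hB.1.trace_cfc, ← Complex.ofReal_sum, Complex.ofReal_re]
  rfl

lemma Matrix.IsHermitian.mul_cfc_indicator_pos_eq_posPart {X : Matrix m m ℂ} (hX : X.IsHermitian) :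
    X * cfc (fun x : ℝ => if 0 < x then (1 : ℝ) else 0) X = X⁺ := by
  rw [CFC.posPart_def, cfcₙ_eq_cfc]
  nth_rw 1 [← cfc_id' ℝ X]
  rw [← cfc_mul (fun x : ℝ => x) _ X (hg := X.finite_real_spectrum.continuousOn _)]
  refine cfc_congr fun x _ => ?_
  split_ifs with h
  · simp [h.le]
  · simp [not_lt.mp h]

lemma Matrix.IsHermitian.exists_traceNorm_eq_two_mul_re_trace_mul {X : Matrix m m ℂ}
    (hX : X.IsHermitian) (h0 : X.trace = 0) :
    ∃ E : Matrix m m ℂ, 0 ≤ E ∧ E ≤ 1 ∧ traceNorm X = 2 * (X * E).trace.re := by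
  refine ⟨cfc (fun x : ℝ => if 0 < x then (1 : ℝ) else 0) X, cfc_nonneg fun x _ => ?_,
    cfc_le_one _ X fun x _ => ?_, ?_⟩
  · split_ifs <;> norm_num
  · split_ifs <;> norm_num
  · have h := congrArg trace (CFC.abs_add_self X)
    rw [trace_add, h0, add_zero] at h
    rw [hX.mul_cfc_indicator_pos_eq_posPart, traceNorm_eq_re_trace_abs, h, trace_smul]
    simp

end TraceNormDuality

section TraceInequalities

variable {m : Type*} [Fintype m] [DecidableEq m]

lemma re_trace_conjTranspose_mul_le (A B : Matrix m m ℂ) :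
    (Aᴴ * B).trace.re ≤ √(Aᴴ * A).trace.re * √(Bᴴ * B).trace.re := by
  let _ := toMatrixSeminormedAddCommGroup (1 : Matrix m m ℂ) PosSemidef.one
  let _ := toMatrixInnerProductSpace (1 : Matrix m m ℂ) PosSemidef.one
  have hinner (C D : Matrix m m ℂ) : inner ℂ C D = (Cᴴ * D).trace := by
    change (D * 1 * Cᴴ).trace = _
    rw [mul_one, trace_mul_comm]
  have hnorm (C : Matrix m m ℂ) : ‖C‖ = √(Cᴴ * C).trace.re := by
    rw [norm_eq_sqrt_re_inner (𝕜 := ℂ), hinner]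
    rfl
  rw [← hnorm, ← hnorm, ← RCLike.re_eq_complex_re, ← hinner]
  exact re_inner_le_norm A B

lemma Matrix.PosSemidef.trace_mul_nonneg {A B : Matrix m m ℂ} (hA : A.PosSemidef)
    (hB : B.PosSemidef) : 0 ≤ (A * B).trace := by
  obtain ⟨C, rfl⟩ := CStarAlgebra.nonneg_iff_eq_star_mul_self.mp hA.nonneg
  rw [star_eq_conjTranspose, mul_assoc, trace_mul_comm]
  simpa [mul_assoc] using (hB.mul_mul_conjTranspose_same C).trace_nonneg

lemma Matrix.PosSemidef.re_trace_mul_le {A E : Matrix m m ℂ} (hA : A.PosSemidef) (hE : E ≤ 1) :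
    (A * E).trace.re ≤ A.trace.re := by
  have h := (Complex.le_def.mp (hA.trace_mul_nonneg hE)).1
  simpa [mul_sub, trace_sub] using h

lemma re_trace_conjTranspose_mul_self_conj_le {G E : Matrix m m ℂ} (hG : Gᴴ = G) (hE0 : 0 ≤ E)
    (hE1 : E ≤ 1) :
    ((G * E * G)ᴴ * (G * E * G)).trace.re ≤ (G * G * (G * G)).trace.re := by
  have hW : (G * G).PosSemidef := by simpa [hG] using posSemidef_conjTranspose_mul_self G
  have hWEW : (G * G * E * (G * G)).PosSemidef := by
    simpa [hW.1.eq] using hE0.posSemidef.mul_mul_conjTranspose_same (G * G)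
  have hWW : (G * G * (G * G)).PosSemidef := by
    simpa [hW.1.eq] using posSemidef_conjTranspose_mul_self (G * G)
  calc ((G * E * G)ᴴ * (G * E * G)).trace.re
      = (G * G * E * (G * G) * E).trace.re := by
        rw [conjTranspose_mul, conjTranspose_mul, hG, hE0.posSemidef.1.eq]
        simp only [← mul_assoc]
        rw [trace_mul_comm]
        simp only [← mul_assoc]
    _ ≤ (G * G * E * (G * G)).trace.re := hWEW.re_trace_mul_le hE1
    _ = (G * G * (G * G) * E).trace.re := by rw [trace_mul_comm]; simp only [mul_assoc]
    _ ≤ (G * G * (G * G)).trace.re := hWW.re_trace_mul_le hE1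

lemma re_trace_conj_mul_le {G Y E : Matrix m m ℂ} (hG : Gᴴ = G) (hE0 : 0 ≤ E) (hE1 : E ≤ 1) :
    (G * Y * G * E).trace.re ≤ √(G * G * (G * G)).trace.re * √(Yᴴ * Y).trace.re := by
  calc (G * Y * G * E).trace.re = ((Yᴴ)ᴴ * (G * E * G)).trace.re := by
        rw [conjTranspose_conjTranspose]
        simp only [mul_assoc]
        rw [trace_mul_comm]
        simp only [mul_assoc]
    _ ≤ √((Yᴴ)ᴴ * Yᴴ).trace.re * √((G * E * G)ᴴ * (G * E * G)).trace.re :=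
        re_trace_conjTranspose_mul_le _ _
    _ ≤ √(G * G * (G * G)).trace.re * √(Yᴴ * Y).trace.re := by
        rw [conjTranspose_conjTranspose, trace_mul_comm Y, mul_comm]
        gcongr √?_ * _
        exact re_trace_conjTranspose_mul_self_conj_le hG hE0 hE1

end TraceInequalities

lemma re_trace_sub_conjTranspose_mul_self {m : Type*} [Fintype m] {A C : Matrix m m ℂ}
    (h : (Aᴴ * C).trace = (Cᴴ * C).trace) :
    ((A - C)ᴴ * (A - C)).trace.re = (Aᴴ * A).trace.re - (Cᴴ * C).trace.re := by
  have h' : (Cᴴ * A).trace = star (Cᴴ * C).trace := by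
    rw [← h, ← trace_conjTranspose, conjTranspose_mul, conjTranspose_conjTranspose]
  rw [conjTranspose_sub, sub_mul, mul_sub, mul_sub, trace_sub, trace_sub, trace_sub, h, h']
  simp

section PartialTrace

variable {n r : Type} [Fintype n] [Fintype r]

lemma trace_ptraceFst (X : Matrix (n × r) (n × r) ℂ) : (ptraceFst X).trace = X.trace := by
  rw [trace, trace, Fintype.sum_prod_type_right]
  rfl

lemma ptraceFst_conjTranspose (X : Matrix (n × r) (n × r) ℂ) :
    ptraceFst Xᴴ = (ptraceFst X)ᴴ := by
  ext a b
  simp [ptraceFst, conjTranspose_apply]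

lemma Matrix.IsHermitian.ptraceFst {X : Matrix (n × r) (n × r) ℂ} (hX : X.IsHermitian) :
    (ptraceFst X).IsHermitian := by
  rw [IsHermitian, ← ptraceFst_conjTranspose, hX.eq]

lemma one_kronecker_mul_one_kronecker [DecidableEq n] (a b : Matrix r r ℂ) :
    ((1 : Matrix n n ℂ) ⊗ₖ a) * ((1 : Matrix n n ℂ) ⊗ₖ b) = (1 : Matrix n n ℂ) ⊗ₖ (a * b) := by
  rw [← mul_kronecker_mul, one_mul]

lemma trace_mul_one_kronecker [DecidableEq n] (X : Matrix (n × r) (n × r) ℂ) (Q : Matrix r r ℂ) :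
    (X * ((1 : Matrix n n ℂ) ⊗ₖ Q)).trace = (ptraceFst X * Q).trace := by
  simp only [trace, Matrix.diag, mul_apply, kroneckerMap_apply, one_apply, ite_mul, one_mul,
    zero_mul, mul_ite, mul_zero]
  rw [Fintype.sum_prod_type_right]
  simp only [Fintype.sum_prod_type_right, Finset.sum_ite_eq', Finset.mem_univ, if_true]
  simp only [ptraceFst, of_apply, Finset.sum_mul]
  exact Finset.sum_congr rfl fun _ _ => Finset.sum_comm

lemma Matrix.PosSemidef.mul_one_kronecker_eq_self [DecidableEq n] [DecidableEq r]
    {ρ : Matrix (n × r) (n × r) ℂ} (hρ : ρ.PosSemidef) {Q : Matrix r r ℂ}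
    (hQ : ptraceFst ρ * Q = ptraceFst ρ) :
    ρ * ((1 : Matrix n n ℂ) ⊗ₖ Q) = ρ := by
  obtain ⟨C, rfl⟩ := CStarAlgebra.nonneg_iff_eq_star_mul_self.mp hρ.nonneg
  set K : Matrix (n × r) (n × r) ℂ := (1 : Matrix n n ℂ) ⊗ₖ (1 - Q)
  have hCK : C * K = 0 := by
    rw [← trace_conjTranspose_mul_self_eq_zero_iff]
    calc ((C * K)ᴴ * (C * K)).trace = (star C * C * (K * Kᴴ)).trace := by
          rw [conjTranspose_mul, star_eq_conjTranspose, mul_assoc, trace_mul_comm]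
          simp only [mul_assoc]
      _ = (ptraceFst (star C * C) * ((1 - Q) * (1 - Q)ᴴ)).trace := by
          rw [← trace_mul_one_kronecker, conjTranspose_kronecker, conjTranspose_one,
            ← mul_kronecker_mul, one_mul]
      _ = 0 := by rw [← mul_assoc, mul_sub, mul_one, hQ, sub_self, zero_mul, trace_zero]
  calc star C * C * (1 ⊗ₖ Q) = star C * C * (1 ⊗ₖ Q) + star C * (C * K) := by
        rw [hCK, mul_zero, add_zero]
    _ = star C * C := by
        rw [← mul_assoc, ← mul_add, ← kronecker_add, add_sub_cancel, one_kronecker_one, mul_one]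

/-- `ρ_R^{1/4} ρ_R^{-1/4}` is the support projection of `ρ_R`, which fixes `ρ` on both sides. -/
lemma Matrix.PosSemidef.one_kronecker_conj_conj_eq_self [DecidableEq n] [DecidableEq r]
    {ρ : Matrix (n × r) (n × r) ℂ} (hρ : ρ.PosSemidef) {t : Matrix r r ℂ} (ht : t.IsHermitian)
    (hc : Commute (ptraceFst ρ) t) (h : ptraceFst ρ * t ^ 4 * ptraceFst ρ = ptraceFst ρ) :
    ((1 : Matrix n n ℂ) ⊗ₖ (ptraceFst ρ * t ^ 3)) *
        (((1 : Matrix n n ℂ) ⊗ₖ t) * ρ * ((1 : Matrix n n ℂ) ⊗ₖ t)) *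
        ((1 : Matrix n n ℂ) ⊗ₖ (ptraceFst ρ * t ^ 3)) = ρ := by
  set s := ptraceFst ρ * t ^ 3
  have hs : sᴴ = s := ((hρ.1.ptraceFst.commute_iff (ht.pow 3)).mp (hc.pow_right 3)).star_eq
  have hright : ρ * ((1 : Matrix n n ℂ) ⊗ₖ (t * s)) = ρ :=
    hρ.mul_one_kronecker_eq_self (hc.mul_mul_mul_pow_three h)
  have hleft : ((1 : Matrix n n ℂ) ⊗ₖ (s * t)) * ρ = ρ := by
    simpa [conjTranspose_mul, conjTranspose_kronecker, hρ.1.eq, hs, ht.eq] using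
      congrArg Matrix.conjTranspose hright
  calc ((1 : Matrix n n ℂ) ⊗ₖ s) * (((1 : Matrix n n ℂ) ⊗ₖ t) * ρ * ((1 : Matrix n n ℂ) ⊗ₖ t)) *
        ((1 : Matrix n n ℂ) ⊗ₖ s)
      = ((1 : Matrix n n ℂ) ⊗ₖ s) * ((1 : Matrix n n ℂ) ⊗ₖ t) * ρ *
          (((1 : Matrix n n ℂ) ⊗ₖ t) * ((1 : Matrix n n ℂ) ⊗ₖ s)) := by
        simp only [mul_assoc]
    _ = ρ := by rw [one_kronecker_mul_one_kronecker, one_kronecker_mul_one_kronecker, hleft, hright]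

end PartialTrace

section ExtendR

variable {n o r : Type} [Fintype n] [Fintype o] [Fintype r]

lemma extendR_apply (Φ : Matrix n n ℂ →ₗ[ℂ] Matrix o o ℂ) (X : Matrix (n × r) (n × r) ℂ)
    (i j : o) (e f : r) :
    extendR Φ X (i, e) (j, f) = Φ (of fun x y => X (x, e) (y, f)) i j :=
  rfl

lemma extendR_sub (Φ Ψ : Matrix n n ℂ →ₗ[ℂ] Matrix o o ℂ) (X : Matrix (n × r) (n × r) ℂ) :
    extendR (Φ - Ψ) X = extendR Φ X - extendR Ψ X := by
  ext a b
  simp [extendR]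

lemma ptraceFst_extendR {Φ : Matrix n n ℂ →ₗ[ℂ] Matrix o o ℂ}
    (hΦ : ∀ M, (Φ M).trace = M.trace) (X : Matrix (n × r) (n × r) ℂ) :
    ptraceFst (extendR Φ X) = ptraceFst X := by
  ext e f
  exact hΦ (of fun x y => X (x, e) (y, f))

lemma extendR_isHermitian {Φ : Matrix n n ℂ →ₗ[ℂ] Matrix o o ℂ}
    (hΦ : ∀ M, M.IsHermitian → (Φ M).IsHermitian) {X : Matrix (n × r) (n × r) ℂ}
    (hX : X.IsHermitian) : (extendR Φ X).IsHermitian := by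
  ext ⟨i, e⟩ ⟨j, f⟩
  have hblock :
      star (of fun x y => X (x, f) (y, e) : Matrix n n ℂ) = of fun x y => X (x, e) (y, f) := by
    ext x y
    exact hX.apply (x, e) (y, f)
  rw [conjTranspose_apply, extendR_apply, extendR_apply, ← hblock,
    Φ.map_star_of_isSelfAdjoint hΦ]
  rfl

lemma one_kronecker_mul_apply [DecidableEq n] {p : Type*} (a : Matrix r r ℂ)
    (X : Matrix (n × r) p ℂ) (x : n) (e : r) (q : p) :
    (((1 : Matrix n n ℂ) ⊗ₖ a) * X) (x, e) q = ∑ c, a e c * X (x, c) q := by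
  simp [mul_apply, Fintype.sum_prod_type, one_apply, ite_mul]

lemma mul_one_kronecker_apply [DecidableEq n] {p : Type*} (b : Matrix r r ℂ)
    (X : Matrix p (n × r) ℂ) (q : p) (y : n) (f : r) :
    (X * ((1 : Matrix n n ℂ) ⊗ₖ b)) q (y, f) = ∑ d, X q (y, d) * b d f := by
  simp [mul_apply, Fintype.sum_prod_type, one_apply, mul_ite]

lemma extendR_one_kronecker_mul [DecidableEq n] [DecidableEq o]
    (Φ : Matrix n n ℂ →ₗ[ℂ] Matrix o o ℂ) (a : Matrix r r ℂ) (X : Matrix (n × r) (n × r) ℂ) :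
    extendR Φ (((1 : Matrix n n ℂ) ⊗ₖ a) * X) = ((1 : Matrix o o ℂ) ⊗ₖ a) * extendR Φ X := by
  ext ⟨i, e⟩ ⟨j, f⟩
  have hblock : (of fun x y => (((1 : Matrix n n ℂ) ⊗ₖ a) * X) (x, e) (y, f) : Matrix n n ℂ)
      = ∑ c, a e c • of fun x y => X (x, c) (y, f) := by
    ext x y
    simp [one_kronecker_mul_apply, Matrix.sum_apply]
  rw [one_kronecker_mul_apply, extendR_apply, hblock, map_sum, Matrix.sum_apply]
  simp only [map_smul, Matrix.smul_apply, smul_eq_mul]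
  rfl

lemma extendR_mul_one_kronecker [DecidableEq n] [DecidableEq o]
    (Φ : Matrix n n ℂ →ₗ[ℂ] Matrix o o ℂ) (b : Matrix r r ℂ) (X : Matrix (n × r) (n × r) ℂ) :
    extendR Φ (X * ((1 : Matrix n n ℂ) ⊗ₖ b)) = extendR Φ X * ((1 : Matrix o o ℂ) ⊗ₖ b) := by
  ext ⟨i, e⟩ ⟨j, f⟩
  have hblock : (of fun x y => (X * ((1 : Matrix n n ℂ) ⊗ₖ b)) (x, e) (y, f) : Matrix n n ℂ)
      = ∑ d, b d f • of fun x y => X (x, e) (y, d) := by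
    ext x y
    simp [mul_one_kronecker_apply, Matrix.sum_apply, mul_comm]
  rw [mul_one_kronecker_apply, extendR_apply, hblock, map_sum, Matrix.sum_apply]
  simp only [map_smul, Matrix.smul_apply, smul_eq_mul, mul_comm]
  rfl

end ExtendR

section Depolarizing

variable {n o r : Type} [Fintype n] [Fintype o] [DecidableEq o] [Fintype r]

def IsCompletelyDepolarizing (τ : Matrix n n ℂ →ₗ[ℂ] Matrix o o ℂ) : Prop :=
  ∀ X, τ X = (X.trace / (Fintype.card o : ℂ)) • (1 : Matrix o o ℂ)

namespace IsCompletelyDepolarizing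

variable {τ : Matrix n n ℂ →ₗ[ℂ] Matrix o o ℂ}

lemma trace_apply [Nonempty o] (hτ : IsCompletelyDepolarizing τ) (M : Matrix n n ℂ) :
    (τ M).trace = M.trace := by
  rw [hτ, trace_smul, trace_one, smul_eq_mul,
    div_mul_cancel₀ _ (Nat.cast_ne_zero.mpr Fintype.card_ne_zero)]

lemma isHermitian_apply (hτ : IsCompletelyDepolarizing τ) {M : Matrix n n ℂ}
    (hM : M.IsHermitian) : (τ M).IsHermitian := by
  rw [hτ, IsHermitian, conjTranspose_smul, conjTranspose_one, star_div₀, ← trace_conjTranspose,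
    hM.eq, star_natCast]

lemma extendR_eq (hτ : IsCompletelyDepolarizing τ) (X : Matrix (n × r) (n × r) ℂ) :
    extendR τ X = (1 : Matrix o o ℂ) ⊗ₖ ((Fintype.card o : ℂ)⁻¹ • ptraceFst X) := by
  ext ⟨i, e⟩ ⟨j, f⟩
  rw [extendR_apply, hτ]
  simp [one_apply, ptraceFst, trace, div_eq_inv_mul]

/-- `τ ⊗ id` only sees the marginal on `R`, so its Hilbert–Schmidt inner product with the image
of any trace-preserving `ψ ⊗ id` equals its own squared norm. -/
lemma re_trace_extendR_sub_conjTranspose_mul_self [Nonempty o]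
    (hτ : IsCompletelyDepolarizing τ) {ψ : Matrix n n ℂ →ₗ[ℂ] Matrix o o ℂ}
    (hψ : ∀ M, (ψ M).trace = M.trace) (X : Matrix (n × r) (n × r) ℂ) :
    ((extendR (ψ - τ) X)ᴴ * extendR (ψ - τ) X).trace.re
      = ((extendR ψ X)ᴴ * extendR ψ X).trace.re - ((extendR τ X)ᴴ * extendR τ X).trace.re := by
  have hinner (A : Matrix (o × r) (o × r) ℂ) (hA : ptraceFst A = ptraceFst X) :
      (Aᴴ * extendR τ X).trace
        = ((ptraceFst X)ᴴ * ((Fintype.card o : ℂ)⁻¹ • ptraceFst X)).trace := by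
    rw [hτ.extendR_eq, trace_mul_one_kronecker, ptraceFst_conjTranspose, hA]
  rw [extendR_sub]
  apply re_trace_sub_conjTranspose_mul_self
  rw [hinner _ (ptraceFst_extendR hψ X), hinner _ (ptraceFst_extendR hτ.trace_apply X)]

end IsCompletelyDepolarizing

end Depolarizing

theorem trace_norm_bound_weighted_general
    {n o r : Type} [Fintype n] [DecidableEq n] [Fintype o] [DecidableEq o]
    [Fintype r] [DecidableEq r] [Nonempty o]
    (ψ τ : Matrix n n ℂ →ₗ[ℂ] Matrix o o ℂ)
    (hψtr : ∀ X : Matrix n n ℂ, (ψ X).trace = X.trace)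
    (hψherm : ∀ X : Matrix n n ℂ, X.IsHermitian → (ψ X).IsHermitian)
    (hτ : ∀ X : Matrix n n ℂ, τ X = (X.trace / (Fintype.card o : ℂ)) • (1 : Matrix o o ℂ))
    (ρ : Matrix (n × r) (n × r) ℂ) (hρ : ρ.PosSemidef) (hρtr : ρ.trace = 1)
    (ρR : Matrix r r ℂ) (hρReq : ρR = ptraceFst ρ)
    -- t = ρ_R^{−1/4}: the pseudo-inverse fourth root of ρ_R
    (t : Matrix r r ℂ) (ht : t.PosSemidef) (htc : ρR * t = t * ρR)
    (ht1 : ρR * (t * t * t * t) * ρR = ρR) :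
    traceNorm (extendR (ψ - τ) ρ)
      ≤ 2 * Real.sqrt (Fintype.card o) *
        Real.sqrt
          ((((extendR ψ (((1 : Matrix n n ℂ) ⊗ₖ t) * ρ * ((1 : Matrix n n ℂ) ⊗ₖ t)))ᴴ *
              (extendR ψ (((1 : Matrix n n ℂ) ⊗ₖ t) * ρ * ((1 : Matrix n n ℂ) ⊗ₖ t)))).trace).re
          - (((extendR τ (((1 : Matrix n n ℂ) ⊗ₖ t) * ρ * ((1 : Matrix n n ℂ) ⊗ₖ t)))ᴴ *
              (extendR τ (((1 : Matrix n n ℂ) ⊗ₖ t) * ρ * ((1 : Matrix n n ℂ) ⊗ₖ t)))).trace).re) := by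
  subst hρReq
  have hτ' : IsCompletelyDepolarizing τ := hτ
  have hc : Commute (ptraceFst ρ) t := htc
  have ht4 : ptraceFst ρ * t ^ 4 * ptraceFst ρ = ptraceFst ρ := by
    simpa only [pow_succ, pow_zero, one_mul] using ht1
  -- `s = ρ_R^{1/4}` on the support of `ρ_R`
  set s := ptraceFst ρ * t ^ 3
  have hs : sᴴ = s := ((hρ.1.ptraceFst.commute_iff (ht.1.pow 3)).mp (hc.pow_right 3)).star_eq
  set G := (1 : Matrix o o ℂ) ⊗ₖ s
  have hG : Gᴴ = G := by rw [conjTranspose_kronecker, conjTranspose_one, hs]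
  have hG4 : (G * G * (G * G)).trace.re = Fintype.card o := by
    rw [one_kronecker_mul_one_kronecker, one_kronecker_mul_one_kronecker,
      show s * s * (s * s) = s ^ 4 by noncomm_ring, hc.mul_pow_three_pow_four ht4,
      trace_kronecker, trace_one, trace_ptraceFst, hρtr]
    simp
  have hX : (extendR (ψ - τ) ρ).IsHermitian :=
    extendR_isHermitian (fun M hM => (hψherm M hM).sub (hτ'.isHermitian_apply hM)) hρ.1
  have hX0 : (extendR (ψ - τ) ρ).trace = 0 := by
    rw [extendR_sub, trace_sub, ← trace_ptraceFst, ← trace_ptraceFst (extendR τ ρ),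
      ptraceFst_extendR hψtr, ptraceFst_extendR hτ'.trace_apply, sub_self]
  obtain ⟨E, hE0, hE1, hnorm⟩ := hX.exists_traceNorm_eq_two_mul_re_trace_mul hX0
  have hXY := congrArg (extendR (ψ - τ)) (hρ.one_kronecker_conj_conj_eq_self ht.1 hc ht4)
  rw [extendR_mul_one_kronecker, extendR_one_kronecker_mul] at hXY
  rw [hnorm, ← hτ'.re_trace_extendR_sub_conjTranspose_mul_self hψtr, ← hXY, ← hG4]
  linarith [re_trace_conj_mul_le (Y := extendR (ψ - τ) (((1 : Matrix n n ℂ) ⊗ₖ t) * ρ *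
    ((1 : Matrix n n ℂ) ⊗ₖ t))) hG hE0 hE1]

/-- trace-norm bound from the weighted 2-norm.  For an extractor
superoperator `ψ` (trace- and hermiticity-preserving) and the reference map
`τ(X) = tr[X]·1/(|M||D|)` into an output space of dimension `|M||D| = card o`, and any
state `ρ_{NR}` with `ρ̃ = (1 ⊗ ρ_R^{−1/4}) ρ (1 ⊗ ρ_R^{−1/4})`:
`‖((ψ−τ) ⊗ id_R)(ρ)‖₁ ≤ 2 √(|M||D|) √(⟨ρ̃, ((ψ†∘ψ − τ†∘τ) ⊗ id_R)(ρ̃)⟩)`, where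
`⟨ρ̃, ((ψ†∘ψ − τ†∘τ) ⊗ id)(ρ̃)⟩ = ‖(ψ ⊗ id)(ρ̃)‖₂² − ‖(τ ⊗ id)(ρ̃)‖₂²`. -/
theorem trace_norm_bound_weighted
    {n o r : Type} [Fintype n] [DecidableEq n] [Fintype o] [DecidableEq o]
    [Fintype r] [DecidableEq r] [Nonempty o]
    (ψ τ : Matrix n n ℂ →ₗ[ℂ] Matrix o o ℂ)
    (hψtr : ∀ X : Matrix n n ℂ, (ψ X).trace = X.trace)
    (hψherm : ∀ X : Matrix n n ℂ, X.IsHermitian → (ψ X).IsHermitian)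
    (hτ : ∀ X : Matrix n n ℂ, τ X = (X.trace / (Fintype.card o : ℂ)) • (1 : Matrix o o ℂ))
    (ρ : Matrix (n × r) (n × r) ℂ) (hρ : ρ.PosSemidef) (hρtr : ρ.trace = 1)
    (ρR : Matrix r r ℂ) (hρReq : ρR = ptraceFst ρ)
    -- t = ρ_R^{−1/4}: the pseudo-inverse fourth root of ρ_R
    (t : Matrix r r ℂ) (ht : t.PosSemidef) (htc : ρR * t = t * ρR)
    (ht1 : ρR * (t * t * t * t) * ρR = ρR)
    (ht2 : (t * t * t * t) * ρR * (t * t * t * t) = t * t * t * t) :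
    traceNorm (extendR (ψ - τ) ρ)
      ≤ 2 * Real.sqrt (Fintype.card o) *
        Real.sqrt
          ((((extendR ψ (((1 : Matrix n n ℂ) ⊗ₖ t) * ρ * ((1 : Matrix n n ℂ) ⊗ₖ t)))ᴴ *
              (extendR ψ (((1 : Matrix n n ℂ) ⊗ₖ t) * ρ * ((1 : Matrix n n ℂ) ⊗ₖ t)))).trace).re
          - (((extendR τ (((1 : Matrix n n ℂ) ⊗ₖ t) * ρ * ((1 : Matrix n n ℂ) ⊗ₖ t)))ᴴ *
              (extendR τ (((1 : Matrix n n ℂ) ⊗ₖ t) * ρ * ((1 : Matrix n n ℂ) ⊗ₖ t)))).trace).re) :=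
  trace_norm_bound_weighted_general ψ τ hψtr hψherm hτ ρ hρ hρtr ρR hρReq t ht htc ht1
end
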